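/- arXiv:1812.10279 — 8 statements merged into one kernel-verified Lean document; each statement's English description precedes it below -/
import Mathlib

section
/- Let γ ≥ 1 and let P⁺, P⁻ be distinct positive reals, and define f : (0,∞) → ℝ by f(P) = P^γ + (P⁻P⁺/P)·(((P⁺)^γ − (P⁻)^γ)/(P⁺ − P⁻)) − ((P⁺)^{γ+1} − (P⁻)^{γ+1})/(P⁺ − P⁻). Then f(P⁺) = f(P⁻) = 0 and f''(P) > 0 for all P > 0. Consequently, if P⁺ < P⁻, then f'(P⁺) < 0, f'(P⁻) > 0, f(P) < 0 for P⁺ < P < P⁻, and f(P) > 0 for 0 < P < P⁺ and for P > P⁻. -/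
/-!
Writing `f P = P ^ γ + A / P - B` with `A = P⁻ P⁺ ((P⁺)^γ - (P⁻)^γ) / (P⁺ - P⁻) > 0`, one gets
`f'' P = γ (γ - 1) P ^ (γ - 2) + 2 A / P ^ 3 > 0`, so `f` is strictly convex on `(0, ∞)`.
A strictly convex function vanishing at `a < b` is negative on `(a, b)`, positive outside
`[a, b]`, and its secant slope `0` through the two zeros separates `f' a` from `f' b`.
-/

open Set

namespace StrictConvexOn

variable {S : Set ℝ} {f : ℝ → ℝ} {a b x : ℝ}

lemma neg_of_mem_Ioo_of_eq_zero (hf : StrictConvexOn ℝ S f) (ha : a ∈ S) (hb : b ∈ S)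
    (hfa : f a = 0) (hfb : f b = 0) (hx : x ∈ Ioo a b) : f x < 0 := by
  have hab : a < b := hx.1.trans hx.2
  simpa [hfa, hfb] using hf.lt_on_openSegment ha hb hab.ne (by rwa [openSegment_eq_Ioo hab])

lemma pos_of_lt_of_eq_zero (hf : StrictConvexOn ℝ S f) (hx : x ∈ S) (hb : b ∈ S)
    (hfa : f a = 0) (hfb : f b = 0) (hxa : x < a) (hab : a < b) : 0 < f x := by
  have := hf.slope_strict_mono_adjacent hx hb hxa hab
  rw [hfa, hfb, sub_self, zero_div, zero_sub, neg_div, neg_neg_iff_pos] at this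
  exact (div_pos_iff_of_pos_right (sub_pos.2 hxa)).1 this

lemma pos_of_gt_of_eq_zero (hf : StrictConvexOn ℝ S f) (ha : a ∈ S) (hx : x ∈ S)
    (hfa : f a = 0) (hfb : f b = 0) (hab : a < b) (hbx : b < x) : 0 < f x := by
  have := hf.slope_strict_mono_adjacent ha hx hab hbx
  rw [hfa, hfb, sub_self, zero_div, sub_zero] at this
  exact (div_pos_iff_of_pos_right (sub_pos.2 hbx)).1 this

lemma deriv_neg_of_eq_zero (hf : StrictConvexOn ℝ S f) (ha : a ∈ S) (hb : b ∈ S)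
    (hfa : f a = 0) (hfb : f b = 0) (hab : a < b) (hd : DifferentiableAt ℝ f a) :
    deriv f a < 0 := by
  simpa [slope_def_field, hfa, hfb] using hf.deriv_lt_slope ha hb hab hd

lemma deriv_pos_of_eq_zero (hf : StrictConvexOn ℝ S f) (ha : a ∈ S) (hb : b ∈ S)
    (hfa : f a = 0) (hfb : f b = 0) (hab : a < b) (hd : DifferentiableAt ℝ f b) :
    0 < deriv f b := by
  simpa [slope_def_field, hfa, hfb] using hf.slope_lt_deriv ha hb hab hd

end StrictConvexOn

section RpowAddDiv

variable {γ A B x : ℝ}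

lemma hasDerivAt_rpow_add_div_sub (hx : 0 < x) :
    HasDerivAt (fun P => P ^ γ + A / P - B) (γ * x ^ (γ - 1) - A / x ^ 2) x :=
  (((Real.hasDerivAt_rpow_const (p := γ) (Or.inl hx.ne')).add
    ((hasDerivAt_inv hx.ne').const_mul A)).sub_const B).congr_deriv (by ring)

lemma hasDerivAt_deriv_rpow_add_div_sub (hx : 0 < x) :
    HasDerivAt (deriv fun P => P ^ γ + A / P - B)
      (γ * (γ - 1) * x ^ (γ - 2) + 2 * A / x ^ 3) x := by
  have h := ((Real.hasDerivAt_rpow_const (p := γ - 1) (Or.inl hx.ne')).const_mul γ).sub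
    ((hasDerivAt_zpow (-2) x (Or.inl hx.ne')).const_mul A)
  have hderiv : (deriv fun P => P ^ γ + A / P - B) =ᶠ[nhds x]
      fun P => γ * P ^ (γ - 1) - A * P ^ (-2 : ℤ) :=
    Filter.eventually_of_mem (Ioi_mem_nhds hx) fun P hP => by
      rw [(hasDerivAt_rpow_add_div_sub hP).deriv]
      simp [div_eq_mul_inv, zpow_neg]
  refine (h.congr_of_eventuallyEq hderiv).congr_deriv ?_
  rw [show γ - 1 - 1 = γ - 2 by ring, show (-2 : ℤ) - 1 = -3 by norm_num]
  simp [div_eq_mul_inv]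
  ring

lemma deriv_deriv_rpow_add_div_sub_pos (hγ : 1 ≤ γ) (hA : 0 < A) (hx : 0 < x) :
    0 < deriv (deriv fun P => P ^ γ + A / P - B) x := by
  rw [(hasDerivAt_deriv_rpow_add_div_sub hx).deriv]
  have hγ0 : 0 ≤ γ * (γ - 1) := mul_nonneg (by linarith) (by linarith)
  positivity

lemma strictConvexOn_rpow_add_div_sub (hγ : 1 ≤ γ) (hA : 0 < A) :
    StrictConvexOn ℝ (Ioi 0) fun P => P ^ γ + A / P - B :=
  strictConvexOn_of_deriv2_pos' (convex_Ioi 0)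
    (fun _ hP => (hasDerivAt_rpow_add_div_sub hP).continuousAt.continuousWithinAt)
    fun _ hP => deriv_deriv_rpow_add_div_sub_pos hγ hA hP

end RpowAddDiv

/-- properties of the profile nonlinearity `f` of the viscous QHD
traveling-wave equation: `f(P⁺) = f(P⁻) = 0`, strict convexity (`f'' > 0` on `(0,∞)`),
and the resulting sign properties when `P⁺ < P⁻`. -/
theorem stmt_0 (γ Pp Pm : ℝ) (hγ : 1 ≤ γ) (hPp : 0 < Pp) (hPm : 0 < Pm) (hne : Pp ≠ Pm)
    (f : ℝ → ℝ)
    (hf : ∀ P : ℝ, f P =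
      P ^ γ + Pm * Pp / P * ((Pp ^ γ - Pm ^ γ) / (Pp - Pm))
        - (Pp ^ (γ + 1) - Pm ^ (γ + 1)) / (Pp - Pm)) :
    f Pp = 0 ∧ f Pm = 0 ∧
    (∀ P : ℝ, 0 < P → 0 < deriv (deriv f) P) ∧
    (Pp < Pm →
      deriv f Pp < 0 ∧ 0 < deriv f Pm ∧
      (∀ P : ℝ, Pp < P → P < Pm → f P < 0) ∧
      (∀ P : ℝ, 0 < P → P < Pp → 0 < f P) ∧
      (∀ P : ℝ, Pm < P → 0 < f P)) := by
  set C := (Pp ^ γ - Pm ^ γ) / (Pp - Pm) with hC_def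
  set B := (Pp ^ (γ + 1) - Pm ^ (γ + 1)) / (Pp - Pm) with hB_def
  have hC : 0 < C := by
    simpa [slope_def_field] using
      (Real.strictMonoOn_rpow_Ici_of_exponent_pos (by linarith)).slope_pos hPm.le hPp.le hne.symm
  have hA : 0 < Pm * Pp * C := by positivity
  obtain rfl : f = fun P => P ^ γ + Pm * Pp * C / P - B := funext fun P => by rw [hf]; ring
  obtain ⟨hfPp, hfPm⟩ :
      Pp ^ γ + Pm * Pp * C / Pp - B = 0 ∧ Pm ^ γ + Pm * Pp * C / Pm - B = 0 := by
    rw [hC_def, hB_def, Real.rpow_add_one hPp.ne', Real.rpow_add_one hPm.ne']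
    constructor <;> field_simp <;> ring
  have hconv := strictConvexOn_rpow_add_div_sub (B := B) hγ hA
  refine ⟨hfPp, hfPm, fun P hP => deriv_deriv_rpow_add_div_sub_pos hγ hA hP, fun hlt => ?_⟩
  refine ⟨hconv.deriv_neg_of_eq_zero hPp hPm hfPp hfPm hlt
      (hasDerivAt_rpow_add_div_sub hPp).differentiableAt,
    hconv.deriv_pos_of_eq_zero hPp hPm hfPp hfPm hlt
      (hasDerivAt_rpow_add_div_sub hPm).differentiableAt,
    fun P h₁ h₂ => hconv.neg_of_mem_Ioo_of_eq_zero hPp hPm hfPp hfPm ⟨h₁, h₂⟩,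
    fun P hP h => hconv.pos_of_lt_of_eq_zero hP hPm hfPp hfPm h hlt,
    fun P h => hconv.pos_of_gt_of_eq_zero hPp (hPm.trans h) hfPp hfPm hlt h⟩
end

section
/- Let γ ≥ 1 and P⁻ > 0. For u > −P⁻ and h ≠ 0 with P⁻ + h > 0, define f̃(u, h) = (P⁻ + u)^γ + (P⁻(P⁻ + h)/(P⁻ + u))·(((P⁻ + h)^γ − (P⁻)^γ)/h) − (((P⁻ + h)^{γ+1} − (P⁻)^{γ+1})/h). Then f̃ together with its first and second partial derivatives extends continuously to (u, h) = (0, 0), and the extended values satisfy f̃(0,0) = 0, ∂f̃/∂u(0,0) = 0, ∂f̃/∂h(0,0) = 0, ∂²f̃/∂u∂h(0,0) = −(γ(γ+1)/2)(P⁻)^{γ−2}, and ∂²f̃/∂u²(0,0) = γ(γ+1)(P⁻)^{γ−2}. -/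
/-!
The difference quotients `((Pm + h) ^ p - Pm ^ p) / h` are `dslope (· ^ p) Pm (Pm + h)`, and the
`dslope` of a function analytic at `Pm` is again analytic there, so `f̃` extends analytically
across `h = 0`. The extended quotient takes the value `p * Pm ^ (p - 1)` at `h = 0`, and its
`h`-derivative there is half the second derivative `p * (p - 1) * Pm ^ (p - 2)` of `x ^ p`:
differentiate `f x = f a + (x - a) • dslope f a x` twice at `a`. The stated values then follow by
differentiating `f̃` directly.
-/

open Filter Topology

lemma analyticAt_rpow_const {x : ℝ} (hx : 0 < x) (p : ℝ) :
    AnalyticAt ℝ (fun y : ℝ => y ^ p) x := by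
  have h : AnalyticAt ℝ (fun y => Real.exp (Real.log y * p)) x :=
    ((analyticAt_log hx).mul analyticAt_const).rexp'
  refine h.congr ?_
  filter_upwards [lt_mem_nhds hx] with y hy
  rw [Real.rpow_def_of_pos hy]

section DSlope

variable {𝕜 E : Type*} [NontriviallyNormedField 𝕜] [NormedAddCommGroup E] [NormedSpace 𝕜 E]
  {f : 𝕜 → E} {a : 𝕜}

lemma analyticAt_dslope (hf : AnalyticAt 𝕜 f a) : AnalyticAt 𝕜 (dslope f a) a :=
  let ⟨_, hp⟩ := hf
  ⟨_, hp.has_fpower_series_dslope_fslope⟩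

lemma AnalyticAt.deriv_deriv_eq_two_smul_deriv_dslope [CompleteSpace E] (hf : AnalyticAt 𝕜 f a) :
    deriv (deriv f) a = (2 : 𝕜) • deriv (dslope f a) a := by
  set g := dslope f a
  have hg : AnalyticAt 𝕜 g a := analyticAt_dslope hf
  have hdf : deriv f =ᶠ[𝓝 a] fun y => g y + (y - a) • deriv g y := by
    filter_upwards [hg.eventually_analyticAt] with y hgy
    have hfg : f = fun y => f a + (y - a) • g y := by
      funext y
      rw [sub_smul_dslope, add_sub_cancel]
    have hd := (((hasDerivAt_id y).sub_const a).smul hgy.differentiableAt.hasDerivAt).const_add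
      (f a)
    rw [hfg]
    refine hd.deriv.trans ?_
    simp [add_comm]
  have hd2 : HasDerivAt (fun y => g y + (y - a) • deriv g y)
      (deriv g a + ((a - a) • deriv (deriv g) a + (1 : 𝕜) • deriv g a)) a :=
    hg.differentiableAt.hasDerivAt.add (((hasDerivAt_id a).sub_const a).smul
      hg.deriv.differentiableAt.hasDerivAt)
  rw [hdf.deriv_eq, hd2.deriv, sub_self, zero_smul, zero_add, one_smul, two_smul]

end DSlope

lemma dslope_rpow_const_self (a p : ℝ) : dslope (fun x : ℝ => x ^ p) a a = p * a ^ (p - 1) := by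
  rw [dslope_same, Real.deriv_rpow_const]

lemma hasDerivAt_dslope_rpow_const_self {a : ℝ} (ha : 0 < a) (p : ℝ) :
    HasDerivAt (dslope (fun x : ℝ => x ^ p) a) (p * (p - 1) * a ^ (p - 2) / 2) a := by
  have hf := analyticAt_rpow_const ha p
  have h := hf.deriv_deriv_eq_two_smul_deriv_dslope
  rw [Real.deriv_rpow_const', deriv_const_mul_field', Real.deriv_rpow_const', smul_eq_mul,
    sub_sub, one_add_one_eq_two] at h
  exact (analyticAt_dslope hf).differentiableAt.hasDerivAt.congr_deriv (by linarith)

lemma hasDerivAt_dslope_rpow_const_self_add {a : ℝ} (ha : 0 < a) (p : ℝ) :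
    HasDerivAt (fun h => dslope (fun x : ℝ => x ^ p) a (a + h))
      (p * (p - 1) * a ^ (p - 2) / 2) 0 :=
  HasDerivAt.comp_const_add a 0 (by rw [add_zero]; exact hasDerivAt_dslope_rpow_const_self ha p)

noncomputable def shiftedProfile (Pm γ : ℝ) (q : ℝ × ℝ) : ℝ :=
  (Pm + q.1) ^ γ + Pm * (Pm + q.2) / (Pm + q.1) * dslope (· ^ γ) Pm (Pm + q.2)
    - dslope (· ^ (γ + 1)) Pm (Pm + q.2)

namespace shiftedProfile

variable {Pm γ : ℝ}

lemma eq_of_ne_zero (u : ℝ) {h : ℝ} (hh : h ≠ 0) :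
    shiftedProfile Pm γ (u, h) = (Pm + u) ^ γ
      + Pm * (Pm + h) / (Pm + u) * (((Pm + h) ^ γ - Pm ^ γ) / h)
      - ((Pm + h) ^ (γ + 1) - Pm ^ (γ + 1)) / h := by
  have hne : Pm + h ≠ Pm := by simpa using hh
  simp only [shiftedProfile, dslope_of_ne _ hne, slope_def_field, add_sub_cancel_left]

lemma analyticAt_zero (hPm : 0 < Pm) : AnalyticAt ℝ (shiftedProfile Pm γ) 0 := by
  have hfst : AnalyticAt ℝ (fun q : ℝ × ℝ => Pm + q.1) 0 :=
    analyticAt_const.add analyticAt_fst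
  have hsnd : AnalyticAt ℝ (fun q : ℝ × ℝ => Pm + q.2) 0 :=
    analyticAt_const.add analyticAt_snd
  have hslope (p : ℝ) : AnalyticAt ℝ (fun q : ℝ × ℝ => dslope (· ^ p) Pm (Pm + q.2)) 0 :=
    (analyticAt_dslope (analyticAt_rpow_const hPm p)).comp_of_eq hsnd (by simp)
  have hpow : AnalyticAt ℝ (fun q : ℝ × ℝ => (Pm + q.1) ^ γ) 0 :=
    (analyticAt_rpow_const hPm γ).comp_of_eq hfst (by simp)
  exact (hpow.add (((analyticAt_const.mul hsnd).div hfst (by simpa using hPm.ne')).mul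
    (hslope γ))).sub (hslope (γ + 1))

lemma zero_zero (hPm : 0 < Pm) : shiftedProfile Pm γ (0, 0) = 0 := by
  simp only [shiftedProfile, add_zero, dslope_rpow_const_self, add_sub_cancel_right,
    Real.rpow_sub_one hPm.ne']
  field_simp
  ring

lemma hasDerivAt_fst (h : ℝ) {u : ℝ} (hu : Pm + u ≠ 0) :
    HasDerivAt (fun u => shiftedProfile Pm γ (u, h))
      (γ * (Pm + u) ^ (γ - 1) - Pm * (Pm + h) * dslope (· ^ γ) Pm (Pm + h) / (Pm + u) ^ 2)
      u := by
  have hpow := (Real.hasDerivAt_rpow_const (p := γ) (Or.inl hu)).comp_const_add Pm u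
  have hquot := (hasDerivAt_const u (Pm * (Pm + h))).div ((hasDerivAt_id u).const_add Pm) hu
  exact ((hpow.add (hquot.mul_const (dslope (· ^ γ) Pm (Pm + h)))).sub_const
    (dslope (· ^ (γ + 1)) Pm (Pm + h))).congr_deriv (by simp only [id]; ring)

lemma deriv_fst_zero (hPm : 0 < Pm) : deriv (fun u => shiftedProfile Pm γ (u, 0)) 0 = 0 := by
  rw [(hasDerivAt_fst 0 (by simpa using hPm.ne')).deriv]
  simp only [add_zero, dslope_rpow_const_self, Real.rpow_sub_one hPm.ne']
  field_simp
  ring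

lemma deriv_snd_zero (hPm : 0 < Pm) : deriv (fun h => shiftedProfile Pm γ (0, h)) 0 = 0 := by
  have hlin : HasDerivAt (fun h : ℝ => Pm * (Pm + h) / (Pm + 0)) (Pm * 1 / (Pm + 0)) 0 :=
    (((hasDerivAt_id 0).const_add Pm).const_mul Pm).div_const (Pm + 0)
  have hF := ((hasDerivAt_const (0 : ℝ) ((Pm + 0) ^ γ)).add
    (hlin.mul (hasDerivAt_dslope_rpow_const_self_add hPm γ))).sub
    (hasDerivAt_dslope_rpow_const_self_add hPm (γ + 1))
  refine hF.deriv.trans ?_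
  simp only [add_zero, dslope_rpow_const_self, add_sub_cancel_right, Real.rpow_sub_one hPm.ne',
    Real.rpow_sub hPm γ 2, Real.rpow_two, show γ + 1 - 2 = γ - 1 by ring]
  field_simp
  ring

lemma deriv_snd_deriv_fst_zero (hPm : 0 < Pm) :
    deriv (fun h => deriv (fun u => shiftedProfile Pm γ (u, h)) 0) 0
      = -(γ * (γ + 1) / 2) * Pm ^ (γ - 2) := by
  have hfst (h : ℝ) := (hasDerivAt_fst (γ := γ) h (u := 0) (by simpa using hPm.ne')).deriv
  have hlin : HasDerivAt (fun h : ℝ => Pm * (Pm + h)) (Pm * 1) 0 :=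
    ((hasDerivAt_id 0).const_add Pm).const_mul Pm
  have hF := (hasDerivAt_const (0 : ℝ) (γ * (Pm + 0) ^ (γ - 1))).sub
    ((hlin.mul (hasDerivAt_dslope_rpow_const_self_add hPm γ)).div_const ((Pm + 0) ^ 2))
  rw [funext hfst]
  refine hF.deriv.trans ?_
  simp only [add_zero, dslope_rpow_const_self, Real.rpow_sub_one hPm.ne',
    Real.rpow_sub hPm γ 2, Real.rpow_two]
  field_simp
  ring

lemma deriv_deriv_fst_zero (hPm : 0 < Pm) :
    deriv (deriv (fun u => shiftedProfile Pm γ (u, 0))) 0 = γ * (γ + 1) * Pm ^ (γ - 2) := by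
  have hderiv : deriv (fun u => shiftedProfile Pm γ (u, 0)) =ᶠ[𝓝 0] fun u =>
      γ * (Pm + u) ^ (γ - 1) - Pm * (Pm + 0) * dslope (· ^ γ) Pm (Pm + 0) / (Pm + u) ^ 2 := by
    filter_upwards [(continuous_const_add Pm).continuousAt.eventually_ne
      (by simpa using hPm.ne')] with u hu using (hasDerivAt_fst 0 hu).deriv
  have hpow := ((Real.hasDerivAt_rpow_const (p := γ - 1)
    (Or.inl (by simpa using hPm.ne'))).comp_const_add Pm 0).const_mul γ
  have hsq : HasDerivAt (fun u : ℝ => (Pm + u) ^ 2) (2 * (Pm + 0) ^ 1 * 1) 0 :=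
    ((hasDerivAt_id 0).const_add Pm).pow 2
  have hF := hpow.sub ((hasDerivAt_const 0 (Pm * (Pm + 0) * dslope (· ^ γ) Pm (Pm + 0))).div hsq
    (by simpa using hPm.ne'))
  rw [hderiv.deriv_eq]
  refine hF.deriv.trans ?_
  simp only [add_zero, dslope_rpow_const_self, Real.rpow_sub_one hPm.ne',
    Real.rpow_sub hPm γ 2, Real.rpow_two, sub_sub, one_add_one_eq_two]
  field_simp
  ring

end shiftedProfile

theorem stmt_3_general (γ Pm : ℝ) (hPm : 0 < Pm) :
    ∃ F : ℝ × ℝ → ℝ,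
      (∀ u h : ℝ, -Pm < u → h ≠ 0 → 0 < Pm + h →
        F (u, h) = (Pm + u) ^ γ
          + Pm * (Pm + h) / (Pm + u) * (((Pm + h) ^ γ - Pm ^ γ) / h)
          - ((Pm + h) ^ (γ + 1) - Pm ^ (γ + 1)) / h) ∧
      ContDiffAt ℝ 2 F (0, 0) ∧
      F (0, 0) = 0 ∧
      deriv (fun u => F (u, 0)) 0 = 0 ∧
      deriv (fun h => F (0, h)) 0 = 0 ∧
      deriv (fun h => deriv (fun u => F (u, h)) 0) 0 = -(γ * (γ + 1) / 2) * Pm ^ (γ - 2) ∧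
      deriv (deriv (fun u => F (u, 0))) 0 = γ * (γ + 1) * Pm ^ (γ - 2) :=
  ⟨shiftedProfile Pm γ, fun u _ _ hh _ => shiftedProfile.eq_of_ne_zero u hh,
    (shiftedProfile.analyticAt_zero hPm).contDiffAt, shiftedProfile.zero_zero hPm,
    shiftedProfile.deriv_fst_zero hPm, shiftedProfile.deriv_snd_zero hPm,
    shiftedProfile.deriv_snd_deriv_fst_zero hPm, shiftedProfile.deriv_deriv_fst_zero hPm⟩

/-- the shifted profile nonlinearity `f̃(u,h)` extends, together with its first
and second partial derivatives, continuously to `(u,h) = (0,0)` (i.e. it has a `C²` extension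
at the origin), with the stated values of the extension and of its partial derivatives. -/
theorem stmt_3 (γ Pm : ℝ) (hγ : 1 ≤ γ) (hPm : 0 < Pm) :
    ∃ F : ℝ × ℝ → ℝ,
      (∀ u h : ℝ, -Pm < u → h ≠ 0 → 0 < Pm + h →
        F (u, h) = (Pm + u) ^ γ
          + Pm * (Pm + h) / (Pm + u) * (((Pm + h) ^ γ - Pm ^ γ) / h)
          - ((Pm + h) ^ (γ + 1) - Pm ^ (γ + 1)) / h) ∧
      ContDiffAt ℝ 2 F (0, 0) ∧
      F (0, 0) = 0 ∧
      deriv (fun u => F (u, 0)) 0 = 0 ∧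
      deriv (fun h => F (0, h)) 0 = 0 ∧
      deriv (fun h => deriv (fun u => F (u, h)) 0) 0 = -(γ * (γ + 1) / 2) * Pm ^ (γ - 2) ∧
      deriv (deriv (fun u => F (u, 0))) 0 = γ * (γ + 1) * Pm ^ (γ - 2) :=
  stmt_3_general γ Pm hPm
end

section
/- Let γ ≥ 1, s ∈ ℝ, let P⁺, P⁻ be distinct positive reals, and suppose J⁺, J⁻, s satisfy the Rankine–Hugoniot conditions J⁺ − J⁻ = s(P⁺ − P⁻) and ((J⁺)²/P⁺ + (P⁺)^γ) − ((J⁻)²/P⁻ + (P⁻)^γ) = s(J⁺ − J⁻). Set A = sP⁻ − J⁻, c_s(ρ) = √(γρ^{γ−1}), u^± = J^±/P^±. If the Lax 2-shock condition u⁺ + c_s(P⁺) < s < u⁻ + c_s(P⁻) holds, then A > 0 and P⁺ < P⁻. If instead the Lax 1-shock condition u⁺ − c_s(P⁺) < s < u⁻ − c_s(P⁻) holds, then A < 0 and P⁺ > P⁻. -/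
/-!
The first Rankine–Hugoniot condition says that the mass flux through the shock, `A = sP − J`,
is the same on both sides, so `s − u^± = A / P^±`. The Lax 2-shock condition then reads
`c_s(P⁺) < A / P⁺` and `A / P⁻ < c_s(P⁻)`. Since `c_s ≥ 0` this forces `A > 0`, and since
`c_s` is nondecreasing for `γ ≥ 1` while `ρ ↦ A / ρ` is decreasing, it forces `P⁺ < P⁻`.
The 1-shock case is the same argument for `−A` with the two states exchanged.
-/

open Set

noncomputable def soundSpeed (γ ρ : ℝ) : ℝ := √(γ * ρ ^ (γ - 1))

lemma soundSpeed_nonneg (γ ρ : ℝ) : 0 ≤ soundSpeed γ ρ := Real.sqrt_nonneg _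

lemma soundSpeed_monotoneOn {γ : ℝ} (hγ : 1 ≤ γ) : MonotoneOn (soundSpeed γ) (Ici 0) := by
  intro a ha b _ hab
  apply Real.sqrt_le_sqrt
  gcongr

lemma pos_and_lt_of_lt_div_of_div_lt {c : ℝ → ℝ} (hc : MonotoneOn c (Ici 0)) {p q A : ℝ}
    (hc0 : 0 ≤ c p) (hp : 0 < p) (hq : 0 < q) (hcp : c p < A / p) (hcq : A / q < c q) :
    0 < A ∧ p < q := by
  have hA : 0 < A := (div_pos_iff_of_pos_right hp).mp (hc0.trans_lt hcp)
  refine ⟨hA, lt_of_not_ge fun hqp => ?_⟩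
  have hdiv : A / p ≤ A / q := div_le_div_of_nonneg_left hA.le hq hqp
  have hmono : c q ≤ c p := hc (mem_Ici.mpr hq.le) (mem_Ici.mpr hp.le) hqp
  linarith

lemma mul_sub_div_eq_sub_div {P : ℝ} (hP : 0 < P) (s J : ℝ) : (s * P - J) / P = s - J / P := by
  rw [sub_div, mul_div_cancel_right₀ _ hP.ne']

theorem stmt_6_general (γ s Pp Pm Jp Jm : ℝ) (hγ : 1 ≤ γ) (hPp : 0 < Pp) (hPm : 0 < Pm)
    (hRH1 : Jp - Jm = s * (Pp - Pm)) :
    ((Jp / Pp + Real.sqrt (γ * Pp ^ (γ - 1)) < s ∧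
        s < Jm / Pm + Real.sqrt (γ * Pm ^ (γ - 1))) →
      0 < s * Pm - Jm ∧ Pp < Pm) ∧
    ((Jp / Pp - Real.sqrt (γ * Pp ^ (γ - 1)) < s ∧
        s < Jm / Pm - Real.sqrt (γ * Pm ^ (γ - 1))) →
      s * Pm - Jm < 0 ∧ Pm < Pp) := by
  have hflux : s * Pp - Jp = s * Pm - Jm := by linear_combination -hRH1
  have hvp := mul_sub_div_eq_sub_div hPp s Jp
  have hvm := mul_sub_div_eq_sub_div hPm s Jm
  have hc := soundSpeed_monotoneOn hγ
  constructor
  · rintro ⟨hlaxp, hlaxm⟩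
    refine pos_and_lt_of_lt_div_of_div_lt hc (soundSpeed_nonneg γ Pp) hPp hPm ?_ ?_
    · rw [← hflux, hvp]; unfold soundSpeed; linarith
    · rw [hvm]; unfold soundSpeed; linarith
  · rintro ⟨hlaxp, hlaxm⟩
    have hneg (P J : ℝ) : (J - s * P) / P = -((s * P - J) / P) := by ring
    have hcm : soundSpeed γ Pm < (Jm - s * Pm) / Pm := by
      rw [hneg, hvm]; unfold soundSpeed; linarith
    have hcp : (Jm - s * Pm) / Pp < soundSpeed γ Pp := by
      rw [show Jm - s * Pm = Jp - s * Pp by linarith, hneg, hvp]; unfold soundSpeed; linarith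
    obtain ⟨hA, hlt⟩ := pos_and_lt_of_lt_div_of_div_lt hc (soundSpeed_nonneg γ Pm) hPm hPp hcm hcp
    exact ⟨by linarith, hlt⟩

/-- under the Rankine–Hugoniot conditions, the Lax 2-shock condition
(`u⁺ + c_s(P⁺) < s < u⁻ + c_s(P⁻)`) forces `A = sP⁻ − J⁻ > 0` and `P⁺ < P⁻`, while the Lax
1-shock condition (`u⁺ − c_s(P⁺) < s < u⁻ − c_s(P⁻)`) forces `A < 0` and `P⁺ > P⁻`. -/
theorem stmt_6 (γ s Pp Pm Jp Jm : ℝ) (hγ : 1 ≤ γ) (hPp : 0 < Pp) (hPm : 0 < Pm)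
    (hne : Pp ≠ Pm)
    (hRH1 : Jp - Jm = s * (Pp - Pm))
    (hRH2 : (Jp ^ 2 / Pp + Pp ^ γ) - (Jm ^ 2 / Pm + Pm ^ γ) = s * (Jp - Jm)) :
    ((Jp / Pp + Real.sqrt (γ * Pp ^ (γ - 1)) < s ∧
        s < Jm / Pm + Real.sqrt (γ * Pm ^ (γ - 1))) →
      0 < s * Pm - Jm ∧ Pp < Pm) ∧
    ((Jp / Pp - Real.sqrt (γ * Pp ^ (γ - 1)) < s ∧
        s < Jm / Pm - Real.sqrt (γ * Pm ^ (γ - 1))) →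
      s * Pm - Jm < 0 ∧ Pm < Pp) :=
  stmt_6_general γ s Pp Pm Jp Jm hγ hPp hPm hRH1
end

section
/- Let γ ≥ 1 and 0 < P⁺ < P⁻ with f(P⁺) = f(P⁻) = 0, where f(P) = P^γ − C₁ + C₂/P with C₁ = ((P⁺)^{γ+1} − (P⁻)^{γ+1})/(P⁺ − P⁻) and C₂ = P⁺P⁻·((P⁺)^γ − (P⁻)^γ)/(P⁺ − P⁻) > 0. Define F(P) = P^{γ+1}/(γ+1) − C₁P + C₂·ln P, so F' = f. Then there exists P⋆ ∈ (0, P⁺) such that F(P) − F(P⁻) < 0 for 0 < P < P⋆, F(P⋆) = F(P⁻), and F(P) − F(P⁻) > 0 for P⋆ < P < P⁻. -/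
/-!
The function `P f(P) = P^(γ+1) - C₁ P + C₂` is strictly convex on `[0, ∞)` and vanishes at
`P⁺ < P⁻`, so `f > 0` on `(0, P⁺)` and `f < 0` on `(P⁺, P⁻)`. Hence `F` increases on `(0, P⁺]`
and decreases on `[P⁺, P⁻]`, so `F(P⁺) > F(P⁻)`; since `C₂ > 0`, `F → -∞` at `0⁺`, and the
intermediate value theorem on `(0, P⁺]` produces the unique crossing `P⋆` of the level `F(P⁻)`.
-/

open Set Filter Topology

theorem StrictConvexOn.neg_of_mem_Ioo {s : Set ℝ} {g : ℝ → ℝ} (hg : StrictConvexOn ℝ s g)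
    {a b x : ℝ} (ha : a ∈ s) (hb : b ∈ s) (hga : g a = 0) (hgb : g b = 0) (hx : x ∈ Ioo a b) :
    g x < 0 := by
  have hab : a < b := hx.1.trans hx.2
  simpa [hga, hgb] using hg.lt_on_openSegment ha hb hab.ne (by rwa [openSegment_eq_Ioo hab])

theorem StrictConvexOn.pos_of_lt {s : Set ℝ} {g : ℝ → ℝ} (hg : StrictConvexOn ℝ s g)
    {a b x : ℝ} (hx : x ∈ s) (hb : b ∈ s) (hga : g a = 0) (hgb : g b = 0) (hxa : x < a)
    (hab : a < b) : 0 < g x := by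
  have hslope := hg.slope_strict_mono_adjacent hx hb hxa hab
  rw [hga, hgb, sub_self, zero_div, zero_sub, neg_div, neg_neg_iff_pos] at hslope
  exact (div_pos_iff_of_pos_right (sub_pos.2 hxa)).1 hslope

theorem strictConvexOn_rpow_add_affine {p : ℝ} (hp : 1 < p) (a b : ℝ) :
    StrictConvexOn ℝ (Ici 0) fun x : ℝ => x ^ p + (b - a * x) :=
  (strictConvexOn_rpow hp).add_convexOn ⟨convex_Ici 0, fun _ _ _ _ _ _ _ _ hst =>
    le_of_eq (by simp only [smul_eq_mul]; linear_combination (-b) * hst)⟩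

theorem exists_level_crossing_of_tendsto_atBot {F : ℝ → ℝ} {a₀ a b : ℝ} (ha₀ : a₀ < a)
    (hab : a < b) (hlim : Tendsto F (𝓝[>] a₀) atBot) (hcont : ContinuousOn F (Ioc a₀ a))
    (hmono : StrictMonoOn F (Ioc a₀ a)) (hanti : StrictAntiOn F (Icc a b)) :
    ∃ c ∈ Ioo a₀ a, (∀ x ∈ Ioo a₀ c, F x < F b) ∧ F c = F b ∧ ∀ x ∈ Ioo c b, F b < F x := by
  have hFba : F b < F a := hanti (left_mem_Icc.2 hab.le) (right_mem_Icc.2 hab.le) hab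
  obtain ⟨x₀, hFx₀, hx₀⟩ := ((hlim.eventually (eventually_lt_atBot (F b))).and
    (Ioo_mem_nhdsGT ha₀)).exists
  obtain ⟨c, hc, hFc⟩ := intermediate_value_Icc hx₀.2.le
    (hcont.mono fun x hx => ⟨hx₀.1.trans_le hx.1, hx.2⟩) ⟨hFx₀.le, hFba.le⟩
  have hca : c < a := hc.2.lt_of_ne (by rintro rfl; exact hFba.ne' hFc)
  have hcmem : c ∈ Ioc a₀ a := ⟨hx₀.1.trans_le hc.1, hca.le⟩
  refine ⟨c, ⟨hcmem.1, hca⟩, fun x hx => ?_, hFc, fun x hx => ?_⟩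
  · exact hFc ▸ hmono ⟨hx.1, hx.2.trans hca |>.le⟩ hcmem hx.2
  · rcases le_or_gt x a with hxa | hax
    · exact hFc ▸ hmono hcmem ⟨hcmem.1.trans hx.1, hxa⟩ hx.1
    · exact hanti ⟨hax.le, hx.2.le⟩ (right_mem_Icc.2 hab.le) hx.2

noncomputable def qhdNonlinearity (γ C₁ C₂ P : ℝ) : ℝ := P ^ γ - C₁ + C₂ / P

noncomputable def qhdPotential (γ C₁ C₂ P : ℝ) : ℝ :=
  P ^ (γ + 1) / (γ + 1) - C₁ * P + C₂ * Real.log P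

section QHD

variable {γ C₁ C₂ x p m : ℝ}

theorem mul_qhdNonlinearity (hx : 0 < x) :
    x * qhdNonlinearity γ C₁ C₂ x = x ^ (γ + 1) + (C₂ - C₁ * x) := by
  rw [qhdNonlinearity, Real.rpow_add_one hx.ne']
  field_simp
  ring

theorem qhdNonlinearity_pos (hγ : 0 < γ) (hpm : p < m) (hfp : qhdNonlinearity γ C₁ C₂ p = 0)
    (hfm : qhdNonlinearity γ C₁ C₂ m = 0) (hx : 0 < x) (hxp : x < p) :
    0 < qhdNonlinearity γ C₁ C₂ x := by
  have hp : 0 < p := hx.trans hxp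
  have hconv := strictConvexOn_rpow_add_affine (by linarith : 1 < γ + 1) C₁ C₂
  have hgx := hconv.pos_of_lt hx.le (hp.trans hpm).le
    (by rw [← mul_qhdNonlinearity hp, hfp, mul_zero])
    (by rw [← mul_qhdNonlinearity (hp.trans hpm), hfm, mul_zero]) hxp hpm
  rw [← mul_qhdNonlinearity hx] at hgx
  exact pos_of_mul_pos_right hgx hx.le

theorem qhdNonlinearity_neg (hγ : 0 < γ) (hp : 0 < p) (hfp : qhdNonlinearity γ C₁ C₂ p = 0)
    (hfm : qhdNonlinearity γ C₁ C₂ m = 0) (hx : x ∈ Ioo p m) :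
    qhdNonlinearity γ C₁ C₂ x < 0 := by
  have hm : 0 < m := hp.trans (hx.1.trans hx.2)
  have hconv := strictConvexOn_rpow_add_affine (by linarith : 1 < γ + 1) C₁ C₂
  have hgx := hconv.neg_of_mem_Ioo hp.le hm.le
    (by rw [← mul_qhdNonlinearity hp, hfp, mul_zero])
    (by rw [← mul_qhdNonlinearity hm, hfm, mul_zero]) hx
  rw [← mul_qhdNonlinearity (hp.trans hx.1)] at hgx
  exact neg_of_mul_neg_right hgx (hp.trans hx.1).le

theorem hasDerivAt_qhdPotential (hγ : γ ≠ -1) (hx : x ≠ 0) :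
    HasDerivAt (qhdPotential γ C₁ C₂) (qhdNonlinearity γ C₁ C₂ x) x := by
  have hγ1 : γ + 1 ≠ 0 := by contrapose! hγ; linarith
  have hpow := (Real.hasDerivAt_rpow_const (p := γ + 1) (Or.inl hx)).div_const (γ + 1)
  have h : HasDerivAt (qhdPotential γ C₁ C₂) _ x :=
    (hpow.sub ((hasDerivAt_id' x).const_mul C₁)).add ((Real.hasDerivAt_log hx).const_mul C₂)
  refine h.congr_deriv ?_
  rw [qhdNonlinearity, add_sub_cancel_right, mul_div_cancel_left₀ _ hγ1, mul_one,
    div_eq_mul_inv]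

theorem continuousOn_qhdPotential (hγ : γ ≠ -1) :
    ContinuousOn (qhdPotential γ C₁ C₂) (Ioi 0) := fun _ hx =>
  (hasDerivAt_qhdPotential hγ (ne_of_gt hx)).continuousAt.continuousWithinAt

theorem tendsto_qhdPotential_nhdsGT_zero (hγ : -1 < γ) (hC₂ : 0 < C₂) :
    Tendsto (qhdPotential γ C₁ C₂) (𝓝[>] 0) atBot := by
  have hγ1 : 0 < γ + 1 := by linarith
  have hpoly : Tendsto (fun P : ℝ => P ^ (γ + 1) / (γ + 1) - C₁ * P) (𝓝[>] 0) (𝓝 0) := by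
    have hcont : ContinuousAt (fun P : ℝ => P ^ (γ + 1) / (γ + 1) - C₁ * P) 0 :=
      ((Real.continuousAt_rpow_const 0 (γ + 1) (Or.inr hγ1.le)).div_const _).sub
        (continuous_const.mul continuous_id).continuousAt
    simpa [Real.zero_rpow hγ1.ne'] using hcont.continuousWithinAt.tendsto
  exact hpoly.add_atBot (Real.tendsto_log_nhdsGT_zero.const_mul_atBot hC₂)

theorem strictMonoOn_qhdPotential (hγ : 0 < γ) (hpm : p < m)
    (hfp : qhdNonlinearity γ C₁ C₂ p = 0) (hfm : qhdNonlinearity γ C₁ C₂ m = 0) :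
    StrictMonoOn (qhdPotential γ C₁ C₂) (Ioc 0 p) := by
  refine strictMonoOn_of_hasDerivWithinAt_pos (f' := qhdNonlinearity γ C₁ C₂) (convex_Ioc 0 p)
    ((continuousOn_qhdPotential (by linarith)).mono Ioc_subset_Ioi_self) (fun x hx => ?_)
    fun x hx => ?_
  all_goals rw [interior_Ioc] at hx
  · exact (hasDerivAt_qhdPotential (by linarith) (ne_of_gt hx.1)).hasDerivWithinAt
  · exact qhdNonlinearity_pos hγ hpm hfp hfm hx.1 hx.2

theorem strictAntiOn_qhdPotential (hγ : 0 < γ) (hp : 0 < p)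
    (hfp : qhdNonlinearity γ C₁ C₂ p = 0) (hfm : qhdNonlinearity γ C₁ C₂ m = 0) :
    StrictAntiOn (qhdPotential γ C₁ C₂) (Icc p m) := by
  refine strictAntiOn_of_hasDerivWithinAt_neg (f' := qhdNonlinearity γ C₁ C₂) (convex_Icc p m)
    ((continuousOn_qhdPotential (by linarith)).mono fun x hx => hp.trans_le hx.1)
    (fun x hx => ?_) fun x hx => ?_
  all_goals rw [interior_Icc] at hx
  · exact (hasDerivAt_qhdPotential (by linarith) (hp.trans hx.1).ne').hasDerivWithinAt
  · exact qhdNonlinearity_neg hγ hp hfp hfm hx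

end QHD

theorem stmt_7_general (γ Pp Pm C₁ C₂ : ℝ) (hγ : 1 ≤ γ) (hPp : 0 < Pp) (hPpPm : Pp < Pm)
    (hC₂pos : 0 < C₂)
    (f F : ℝ → ℝ)
    (hf : ∀ P : ℝ, f P = P ^ γ - C₁ + C₂ / P)
    (hfPp : f Pp = 0) (hfPm : f Pm = 0)
    (hF : ∀ P : ℝ, F P = P ^ (γ + 1) / (γ + 1) - C₁ * P + C₂ * Real.log P) :
    ∃ Ps : ℝ, Ps ∈ Set.Ioo 0 Pp ∧
      (∀ P : ℝ, 0 < P → P < Ps → F P - F Pm < 0) ∧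
      F Ps = F Pm ∧
      (∀ P : ℝ, Ps < P → P < Pm → 0 < F P - F Pm) := by
  obtain rfl : f = qhdNonlinearity γ C₁ C₂ := funext hf
  obtain rfl : F = qhdPotential γ C₁ C₂ := funext hF
  have hγ₀ : 0 < γ := by linarith
  obtain ⟨Ps, hPs, hbelow, hFPs, habove⟩ := exists_level_crossing_of_tendsto_atBot hPp hPpPm
    (tendsto_qhdPotential_nhdsGT_zero (by linarith) hC₂pos)
    ((continuousOn_qhdPotential (by linarith)).mono Ioc_subset_Ioi_self)
    (strictMonoOn_qhdPotential hγ₀ hPpPm hfPp hfPm) (strictAntiOn_qhdPotential hγ₀ hPp hfPp hfPm)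
  exact ⟨Ps, hPs, fun P hP hPPs => sub_neg.2 (hbelow P ⟨hP, hPPs⟩), hFPs,
    fun P hPsP hPPm => sub_pos.2 (habove P ⟨hPsP, hPPm⟩)⟩

/-- for the antiderivative `F` of the profile nonlinearity `f`, there is a point
`P⋆ ∈ (0, P⁺)` with `F − F(P⁻)` negative on `(0, P⋆)`, zero at `P⋆`, and positive on
`(P⋆, P⁻)`. -/
theorem stmt_7 (γ Pp Pm C₁ C₂ : ℝ) (hγ : 1 ≤ γ) (hPp : 0 < Pp) (hPpPm : Pp < Pm)
    (hC₁ : C₁ = (Pp ^ (γ + 1) - Pm ^ (γ + 1)) / (Pp - Pm))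
    (hC₂ : C₂ = Pp * Pm * ((Pp ^ γ - Pm ^ γ) / (Pp - Pm)))
    (hC₂pos : 0 < C₂)
    (f F : ℝ → ℝ)
    (hf : ∀ P : ℝ, f P = P ^ γ - C₁ + C₂ / P)
    (hfPp : f Pp = 0) (hfPm : f Pm = 0)
    (hF : ∀ P : ℝ, F P = P ^ (γ + 1) / (γ + 1) - C₁ * P + C₂ * Real.log P) :
    ∃ Ps : ℝ, Ps ∈ Set.Ioo 0 Pp ∧
      (∀ P : ℝ, 0 < P → P < Ps → F P - F Pm < 0) ∧
      F Ps = F Pm ∧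
      (∀ P : ℝ, Ps < P → P < Pm → 0 < F P - F Pm) :=
  stmt_7_general γ Pp Pm C₁ C₂ hγ hPp hPpPm hC₂pos f F hf hfPp hfPm hF
end

section
/- Let s, μ, k > 0 with μ² ≠ 2k², and let α, β ∈ ℝ. Then there exists Λ > 0 such that for every real λ > Λ, the quartic polynomial q(ν) = ν⁴ + (2sμ/k²)ν³ + (2/k²)(α + sβ − λμ)ν² − (2(s + β)λ/k²)ν + 2λ²/k² has no purely imaginary roots, and counted with multiplicity it has exactly two roots with strictly positive real part and exactly two roots with strictly negative real part. Moreover, if μ² > 2k² then for λ > Λ all four roots are real and distinct (two positive and two negative), while if μ² < 2k² then for λ > Λ the roots form two complex-conjugate pairs, one pair in the open right half-plane and one pair in the open left half-plane. -/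
/-!
For `μ² > 2k²`, substituting `ν = t √λ` gives `q(t √λ) = λ² (t⁴ - (2μ/k²) t² + 2/k²) + O(λ^{3/2})`,
and this limiting even quartic in `t` is negative at `t = ±√μ / k` and positive at `0` and
`t = ±2√μ / k`; for large `λ` the intermediate value theorem yields four real roots of `q`.

For `μ² < 2k²`, `k² q(x) / 2` is a quadratic in `λ` with discriminant
`x² ((μ² - 2k²) x² + 2μ(β - s) x + (β - s)² - 4α)`, negative for large `|x|`; so real roots
could only lie in a fixed compact set, where `q > 0` once `λ` is large. The roots then form
conjugate pairs `z, z̄, w, w̄`, and the `ν²`-coefficient `|z|² + |w|² + 4 Re z Re w` is negative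
for large `λ`, which forces `Re z · Re w < 0`.

A purely imaginary root `i y` needs `y² = -(s + β) λ / (s μ)`, which is incompatible with the
vanishing of the real part of `q(i y)` once `λ` is large.
-/

open Polynomial Filter Topology

/-- The characteristic polynomial `ν⁴ + (2sμ/k²)ν³ + (2/k²)(α + sβ − λμ)ν²
− (2(s+β)λ/k²)ν + 2λ²/k²` of the asymptotic matrices of the linearized viscous QHD
system, viewed as a polynomial over `ℂ` (all coefficients are real). -/
noncomputable def charQuartic (s μ k α β lam : ℝ) : Polynomial ℂ :=
  X ^ 4 + C ((2 * s * μ / k ^ 2 : ℝ) : ℂ) * X ^ 3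
    + C ((2 / k ^ 2 * (α + s * β - lam * μ) : ℝ) : ℂ) * X ^ 2
    - C ((2 * (s + β) * lam / k ^ 2 : ℝ) : ℂ) * X
    + C ((2 * lam ^ 2 / k ^ 2 : ℝ) : ℂ)

theorem Filter.Eventually.exists_pos_forall_gt {p : ℝ → Prop} (h : ∀ᶠ x in atTop, p x) :
    ∃ Λ > 0, ∀ x, Λ < x → p x := by
  obtain ⟨a, ha⟩ := eventually_atTop.mp h
  exact ⟨max a 1, by positivity, fun x hx => ha x (le_of_max_le_left hx.le)⟩

theorem Multiset.insert_insert_insert_singleton_swap {α : Type*} (a b c d : α) :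
    ({a, b, c, d} : Multiset α) = {c, d, a, b} := by
  simp only [Multiset.insert_eq_cons, ← Multiset.singleton_add]
  abel

theorem Multiset.exists_eq_cons_cons_of_map_eq {α : Type*} {f : α → α}
    (hf : Function.Involutive f) {M : Multiset α} (hM : M.map f = M) {a : α} (ha : a ∈ M)
    (hfa : f a ≠ a) : ∃ N : Multiset α, N.map f = N ∧ M = a ::ₘ f a ::ₘ N := by
  obtain ⟨M', rfl⟩ := Multiset.exists_cons_of_mem ha
  have hfa' : f a ∈ M' := by
    have : f a ∈ (a ::ₘ M').map f := Multiset.mem_map_of_mem f (Multiset.mem_cons_self a M')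
    rw [hM] at this
    exact (Multiset.mem_cons.mp this).resolve_left hfa
  obtain ⟨N, rfl⟩ := Multiset.exists_cons_of_mem hfa'
  refine ⟨N, ?_, rfl⟩
  rw [Multiset.map_cons, Multiset.map_cons, hf a, Multiset.cons_swap] at hM
  exact (Multiset.cons_inj_right _).mp ((Multiset.cons_inj_right _).mp hM)

theorem Multiset.exists_eq_of_map_eq_of_card_eq_four {α : Type*} {f : α → α}
    (hf : Function.Involutive f) {M : Multiset α} (hM : M.map f = M)
    (hcard : Multiset.card M = 4) (hfix : ∀ a ∈ M, f a ≠ a) :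
    ∃ a b : α, M = {a, f a, b, f b} := by
  obtain ⟨a, ha⟩ := Multiset.card_pos_iff_exists_mem.mp (by omega : 0 < Multiset.card M)
  obtain ⟨N, hN, rfl⟩ := exists_eq_cons_cons_of_map_eq hf hM ha (hfix a ha)
  obtain ⟨b, hb⟩ := Multiset.card_pos_iff_exists_mem.mp
    (by simp only [Multiset.card_cons] at hcard; omega : 0 < Multiset.card N)
  obtain ⟨N', -, rfl⟩ := exists_eq_cons_cons_of_map_eq hf hN hb (hfix b (by simp [hb]))
  obtain rfl : N' = 0 := by simpa using hcard
  exact ⟨a, b, rfl⟩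

theorem Polynomial.roots_eq_of_nodup {R : Type*} [CommRing R] [IsDomain R] {p : R[X]}
    (hp : p ≠ 0) {s : Multiset R} (hs : s.Nodup) (hroot : ∀ x ∈ s, p.IsRoot x)
    (hdeg : p.natDegree ≤ Multiset.card s) : p.roots = s :=
  (Multiset.eq_of_le_of_card_le ((Multiset.le_iff_subset hs).mpr
    fun x hx => (mem_roots hp).mpr (hroot x hx)) ((card_roots' p).trans hdeg)).symm

theorem Polynomial.roots_map_conj {p : ℂ[X]} (hp : p.map (starRingEnd ℂ) = p) :
    p.roots.map (starRingEnd ℂ) = p.roots := by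
  conv_rhs => rw [← hp]
  exact roots_map_of_injective_of_card_eq_natDegree (RingHom.injective _)
    IsAlgClosed.card_roots_eq_natDegree

theorem Polynomial.coeff_two_prod_X_sub_C {R : Type*} [CommRing R] (a b c d : R) :
    ((X - C a) * (X - C b) * (X - C c) * (X - C d)).coeff 2
      = a * b + a * c + a * d + b * c + b * d + c * d := by
  have h : (X - C a) * (X - C b) * (X - C c) * (X - C d)
      = X ^ 4 - C (a + b + c + d) * X ^ 3
        + C (a * b + a * c + a * d + b * c + b * d + c * d) * X ^ 2
        - C (a * b * c + a * b * d + a * c * d + b * c * d) * X + C (a * b * c * d) := by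
    simp only [map_add, map_mul]
    ring
  rw [h]
  simp only [coeff_add, coeff_sub, coeff_C_mul, coeff_X_pow, coeff_X, coeff_C]
  norm_num

theorem Polynomial.coeff_two_re_conj_pairs (z w : ℂ) :
    (((X - C z) * (X - C (starRingEnd ℂ z)) * (X - C w) * (X - C (starRingEnd ℂ w))).coeff 2).re
      = Complex.normSq z + Complex.normSq w + 4 * z.re * w.re := by
  rw [coeff_two_prod_X_sub_C]
  simp only [Complex.add_re, Complex.mul_re, Complex.conj_re, Complex.conj_im, Complex.normSq_apply]
  ring

theorem Polynomial.exists_roots_eq_conj_pairs {p : ℂ[X]} (hp : p.Monic) (hdeg : p.natDegree = 4)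
    (hconj : p.map (starRingEnd ℂ) = p) (hreal : ∀ x : ℝ, ¬ p.IsRoot x)
    (hc : (p.coeff 2).re < 0) :
    ∃ z w : ℂ, z.im ≠ 0 ∧ w.im ≠ 0 ∧ z.re < 0 ∧ 0 < w.re ∧
      p.roots = {z, starRingEnd ℂ z, w, starRingEnd ℂ w} := by
  have hnonreal : ∀ z ∈ p.roots, starRingEnd ℂ z ≠ z := fun z hz hzr => hreal z.re <| by
    rw [Complex.conj_eq_iff_re.mp hzr]
    exact (mem_roots hp.ne_zero).mp hz
  obtain ⟨z, w, hroots⟩ := Multiset.exists_eq_of_map_eq_of_card_eq_four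
    Complex.conj_conj (roots_map_conj hconj)
    (by rw [IsAlgClosed.card_roots_eq_natDegree, hdeg]) hnonreal
  have hzim : z.im ≠ 0 := fun h => hnonreal z (by simp [hroots]) (Complex.conj_eq_iff_im.mpr h)
  have hwim : w.im ≠ 0 := fun h => hnonreal w (by simp [hroots]) (Complex.conj_eq_iff_im.mpr h)
  have hre : z.re * w.re < 0 := by
    have hprod := (IsAlgClosed.splits p).eq_prod_roots_of_monic hp
    rw [hroots] at hprod
    simp only [Multiset.insert_eq_cons, Multiset.map_cons, Multiset.map_singleton,
      Multiset.prod_cons, Multiset.prod_singleton, ← mul_assoc] at hprod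
    rw [hprod, coeff_two_re_conj_pairs] at hc
    nlinarith [Complex.normSq_nonneg z, Complex.normSq_nonneg w]
  rcases lt_or_gt_of_ne (left_ne_zero_of_mul hre.ne) with hz | hz
  · exact ⟨z, w, hzim, hwim, hz, pos_of_mul_neg_right hre hz.le, hroots⟩
  · exact ⟨w, z, hwim, hzim, neg_of_mul_neg_right hre hz.le, hz,
      hroots.trans (Multiset.insert_insert_insert_singleton_swap _ _ _ _)⟩

theorem exists_abs_le_of_quadratic_nonneg {a b c : ℝ} (ha : a < 0) :
    ∃ R, ∀ x : ℝ, 0 ≤ a * x ^ 2 + b * x + c → |x| ≤ R := by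
  refine ⟨(|b| + |c|) / (-a) + 1, fun x hx => ?_⟩
  by_contra! hR
  have hbc : |b| + |c| < -a * (|x| - 1) := by
    rw [← lt_sub_iff_add_lt, div_lt_iff₀ (by linarith)] at hR
    linarith
  have hbx : b * x ≤ |b| * |x| := (le_abs_self _).trans (abs_mul b x).le
  have hx1 : 1 ≤ |x| := by
    have : 0 ≤ (|b| + |c|) / (-a) := div_nonneg (by positivity) (by linarith)
    linarith
  nlinarith [le_abs_self c, sq_abs x, abs_nonneg b, abs_nonneg c]

noncomputable def charQuarticFn (s μ k α β lam x : ℝ) : ℝ :=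
  x ^ 4 + 2 * s * μ / k ^ 2 * x ^ 3 + 2 / k ^ 2 * (α + s * β - lam * μ) * x ^ 2
    - 2 * (s + β) * lam / k ^ 2 * x + 2 * lam ^ 2 / k ^ 2

noncomputable def quarticProfile (μ k t : ℝ) : ℝ := t ^ 4 - 2 * μ / k ^ 2 * t ^ 2 + 2 / k ^ 2

section charQuartic

variable (s μ k α β lam : ℝ)

theorem charQuartic_monic : (charQuartic s μ k α β lam).Monic := by
  unfold charQuartic; monicity!

theorem charQuartic_natDegree : (charQuartic s μ k α β lam).natDegree = 4 := by
  unfold charQuartic; compute_degree!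

theorem charQuartic_map_conj :
    (charQuartic s μ k α β lam).map (starRingEnd ℂ) = charQuartic s μ k α β lam := by
  simp only [charQuartic, Polynomial.map_add, Polynomial.map_sub, Polynomial.map_mul,
    Polynomial.map_pow, map_X, map_C, Complex.conj_ofReal]

theorem charQuartic_coeff_two :
    (charQuartic s μ k α β lam).coeff 2 = ((2 / k ^ 2 * (α + s * β - lam * μ) : ℝ) : ℂ) := by
  simp only [charQuartic, coeff_add, coeff_sub, coeff_C_mul, coeff_X_pow, coeff_X, coeff_C]
  norm_num

theorem charQuartic_isRoot_ofReal_iff (x : ℝ) :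
    (charQuartic s μ k α β lam).IsRoot (x : ℂ) ↔ charQuarticFn s μ k α β lam x = 0 := by
  rw [IsRoot, ← Complex.ofReal_eq_zero, charQuarticFn]
  simp [charQuartic]

theorem charQuartic_eval_I_mul (y : ℝ) :
    (charQuartic s μ k α β lam).eval (Complex.I * y)
      = ((y ^ 4 - 2 / k ^ 2 * (α + s * β - lam * μ) * y ^ 2 + 2 * lam ^ 2 / k ^ 2 : ℝ) : ℂ)
        - ((y * (2 * s * μ / k ^ 2 * y ^ 2 + 2 * (s + β) * lam / k ^ 2) : ℝ) : ℂ) * Complex.I := by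
  simp only [charQuartic, eval_add, eval_sub, eval_mul, eval_pow, eval_C, eval_X]
  push_cast
  linear_combination ((Complex.I ^ 2 - 1) * y ^ 4 + Complex.I * (2 * s * μ / k ^ 2) * y ^ 3
    + 2 / k ^ 2 * (α + s * β - lam * μ) * y ^ 2) * Complex.I_sq

theorem continuous_charQuarticFn : Continuous (charQuarticFn s μ k α β lam) := by
  unfold charQuarticFn; fun_prop

end charQuartic

section largeLambda

variable {s μ k α β : ℝ}

theorem charQuartic_eventually_not_isRoot_I_mul (hs : 0 < s) (hμ : 0 < μ) (hk : 0 < k) :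
    ∀ᶠ lam in atTop, ∀ y : ℝ, ¬ (charQuartic s μ k α β lam).IsRoot (Complex.I * y) := by
  filter_upwards [eventually_gt_atTop 0,
    eventually_gt_atTop (-(α + s * β) * (s + β) / (s * μ))] with lam hlam hlarge y hy
  rw [IsRoot, charQuartic_eval_I_mul, Complex.ext_iff] at hy
  simp only [Complex.sub_re, Complex.sub_im, Complex.ofReal_re, Complex.ofReal_im,
    Complex.mul_re, Complex.mul_im, Complex.I_re, Complex.I_im, Complex.zero_re,
    Complex.zero_im, mul_zero, mul_one, sub_zero, add_zero, zero_sub,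
    neg_eq_zero, mul_eq_zero] at hy
  obtain ⟨hre, hy0 | him⟩ := hy
  · subst hy0
    simp [hlam.ne', hk.ne'] at hre
  have hw : s * μ * y ^ 2 = -(s + β) * lam := by
    field_simp at him
    linear_combination him / 2
  have hre' : lam ^ 2 + μ * lam * y ^ 2 + k ^ 2 / 2 * y ^ 4 = (α + s * β) * y ^ 2 := by
    field_simp at hre
    linear_combination hre / 2
  rw [div_lt_iff₀ (by positivity)] at hlarge
  have hlt : s * μ * (lam ^ 2 + μ * lam * y ^ 2 + k ^ 2 / 2 * y ^ 4) < s * μ * lam ^ 2 :=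
    calc s * μ * (lam ^ 2 + μ * lam * y ^ 2 + k ^ 2 / 2 * y ^ 4)
        = -(α + s * β) * (s + β) * lam := by rw [hre']; linear_combination (α + s * β) * hw
      _ < s * μ * lam ^ 2 := by nlinarith
  have : 0 ≤ s * μ * (μ * lam * y ^ 2 + k ^ 2 / 2 * y ^ 4) := by positivity
  linarith

theorem quarticProfile_neg (t : ℝ) : quarticProfile μ k (-t) = quarticProfile μ k t := by
  unfold quarticProfile; ring

theorem exists_quarticProfile_sign_change (hμ : 0 < μ) (hk : 0 < k) (hgt : 2 * k ^ 2 < μ ^ 2) :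
    ∃ m > 0, quarticProfile μ k m < 0 ∧ 0 < quarticProfile μ k (2 * m) := by
  obtain ⟨m, hm, hm2⟩ : ∃ m > 0, m ^ 2 = μ / k ^ 2 :=
    ⟨√(μ / k ^ 2), by positivity, Real.sq_sqrt (by positivity)⟩
  have hPm : quarticProfile μ k m = (2 * k ^ 2 - μ ^ 2) / k ^ 4 := by
    rw [quarticProfile, show m ^ 4 = (m ^ 2) ^ 2 by ring, hm2]
    field_simp; ring
  have hP2m : quarticProfile μ k (2 * m) = (8 * μ ^ 2 + 2 * k ^ 2) / k ^ 4 := by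
    rw [quarticProfile, show (2 * m) ^ 4 = 16 * (m ^ 2) ^ 2 by ring,
      show (2 * m) ^ 2 = 4 * m ^ 2 by ring, hm2]
    field_simp; ring
  refine ⟨m, hm, ?_, ?_⟩
  · rw [hPm]
    exact div_neg_of_neg_of_pos (by linarith) (by positivity)
  · rw [hP2m]
    positivity

theorem tendsto_charQuarticFn_mul_sqrt_div_sq (t : ℝ) :
    Tendsto (fun lam => charQuarticFn s μ k α β lam (t * √lam) / lam ^ 2) atTop
      (𝓝 (quarticProfile μ k t)) := by
  have hlim := (((tendsto_inv_atTop_zero.comp Real.tendsto_sqrt_atTop).const_mul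
      (2 * s * μ / k ^ 2 * t ^ 3 - 2 * (s + β) / k ^ 2 * t)).add
    (tendsto_inv_atTop_zero.const_mul (2 / k ^ 2 * (α + s * β) * t ^ 2))).const_add
      (quarticProfile μ k t)
  simp only [mul_zero, add_zero] at hlim
  refine hlim.congr' ?_
  filter_upwards [eventually_gt_atTop 0] with lam hlam
  obtain ⟨L, hL, rfl⟩ : ∃ L > 0, L ^ 2 = lam := ⟨√lam, by positivity, Real.sq_sqrt hlam.le⟩
  simp only [Function.comp, Real.sqrt_sq hL.le, charQuarticFn, quarticProfile]
  field_simp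
  ring

variable (s α β) in
theorem eventually_charQuarticFn_mul_sqrt_pos {t : ℝ} (ht : 0 < quarticProfile μ k t) :
    ∀ᶠ lam in atTop, 0 < charQuarticFn s μ k α β lam (t * √lam) := by
  filter_upwards [(tendsto_charQuarticFn_mul_sqrt_div_sq t).eventually_const_lt ht,
    eventually_gt_atTop 0] with lam h hlam
  exact (div_pos_iff_of_pos_right (by positivity)).mp h

variable (s α β) in
theorem eventually_charQuarticFn_mul_sqrt_neg {t : ℝ} (ht : quarticProfile μ k t < 0) :
    ∀ᶠ lam in atTop, charQuarticFn s μ k α β lam (t * √lam) < 0 := by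
  filter_upwards [(tendsto_charQuarticFn_mul_sqrt_div_sq t).eventually_lt_const ht,
    eventually_gt_atTop 0] with lam h hlam
  simpa using (div_lt_iff₀ (by positivity)).mp h

theorem charQuartic_eventually_roots_eq_real (hμ : 0 < μ) (hk : 0 < k)
    (hgt : 2 * k ^ 2 < μ ^ 2) :
    ∀ᶠ lam in atTop, ∃ ν₁ ν₂ ν₃ ν₄ : ℝ, ν₁ < ν₂ ∧ ν₂ < 0 ∧ 0 < ν₃ ∧ ν₃ < ν₄ ∧
      (charQuartic s μ k α β lam).roots = {(ν₁ : ℂ), (ν₂ : ℂ), (ν₃ : ℂ), (ν₄ : ℂ)} := by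
  obtain ⟨m, hm, hPm, hP2m⟩ := exists_quarticProfile_sign_change hμ hk hgt
  have hP0 : 0 < quarticProfile μ k 0 := by norm_num [quarticProfile]; positivity
  filter_upwards [eventually_gt_atTop 0,
    eventually_charQuarticFn_mul_sqrt_pos s α β (hP2m.trans_eq (quarticProfile_neg _).symm),
    eventually_charQuarticFn_mul_sqrt_neg s α β ((quarticProfile_neg m).trans_lt hPm),
    eventually_charQuarticFn_mul_sqrt_pos s α β hP0,
    eventually_charQuarticFn_mul_sqrt_neg s α β hPm,
    eventually_charQuarticFn_mul_sqrt_pos s α β hP2m] with lam hlam h₀ h₁ h₂ h₃ h₄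
  have hL : 0 < m * √lam := mul_pos hm (Real.sqrt_pos.mpr hlam)
  have hf := continuous_charQuarticFn s μ k α β lam
  obtain ⟨ν₁, ⟨-, hν₁⟩, hf₁⟩ := intermediate_value_Ioo' (by nlinarith) hf.continuousOn ⟨h₁, h₀⟩
  obtain ⟨ν₂, ⟨hν₂, hν₂'⟩, hf₂⟩ := intermediate_value_Ioo (by nlinarith) hf.continuousOn ⟨h₁, h₂⟩
  obtain ⟨ν₃, ⟨hν₃, hν₃'⟩, hf₃⟩ := intermediate_value_Ioo' (by nlinarith) hf.continuousOn ⟨h₃, h₂⟩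
  obtain ⟨ν₄, ⟨hν₄, -⟩, hf₄⟩ := intermediate_value_Ioo (by nlinarith) hf.continuousOn ⟨h₃, h₄⟩
  simp only [zero_mul] at hν₂' hν₃
  refine ⟨ν₁, ν₂, ν₃, ν₄, by linarith, hν₂', hν₃, by linarith,
    roots_eq_of_nodup (charQuartic_monic ..).ne_zero ?_ ?_ (by simp [charQuartic_natDegree])⟩
  · simp only [Multiset.insert_eq_cons, Multiset.nodup_cons, Multiset.mem_cons,
      Multiset.mem_singleton, Complex.ofReal_inj, Multiset.nodup_singleton, not_or]
    refine ⟨⟨?_, ?_, ?_⟩, ⟨?_, ?_⟩, ?_, trivial⟩ <;> linarith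
  · simp only [Multiset.insert_eq_cons, Multiset.mem_cons, Multiset.mem_singleton]
    rintro x (rfl | rfl | rfl | rfl) <;> exact (charQuartic_isRoot_ofReal_iff ..).mpr ‹_›

theorem eventually_charQuarticFn_pos (hk : 0 < k) (hlt : μ ^ 2 < 2 * k ^ 2) :
    ∀ᶠ lam in atTop, ∀ x, 0 < charQuarticFn s μ k α β lam x := by
  obtain ⟨R, hR⟩ := exists_abs_le_of_quadratic_nonneg (b := 2 * μ * (β - s))
    (c := (β - s) ^ 2 - 4 * α) (by linarith : μ ^ 2 - 2 * k ^ 2 < 0)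
  obtain ⟨U, hU⟩ := (isCompact_Icc (a := -R) (b := R)).exists_bound_of_continuousOn
    (f := fun x => μ * x ^ 2 + (s + β) * x) (by fun_prop)
  obtain ⟨V, hV⟩ := (isCompact_Icc (a := -R) (b := R)).exists_bound_of_continuousOn
    (f := fun x => k ^ 2 / 2 * x ^ 4 + s * μ * x ^ 3 + (α + s * β) * x ^ 2) (by fun_prop)
  filter_upwards [eventually_gt_atTop 1, eventually_gt_atTop (U + V)] with lam hlam hUV x
  by_contra! hx
  rcases eq_or_ne x 0 with rfl | hx0
  · have : 0 < 2 * lam ^ 2 / k ^ 2 := by positivity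
    simp [charQuarticFn] at hx
    linarith
  set u := μ * x ^ 2 + (s + β) * x
  set v := k ^ 2 / 2 * x ^ 4 + s * μ * x ^ 3 + (α + s * β) * x ^ 2
  have hquad : lam ^ 2 - u * lam + v = k ^ 2 / 2 * charQuarticFn s μ k α β lam x := by
    simp only [u, v, charQuarticFn]
    field_simp
    ring
  have hnonpos : lam ^ 2 - u * lam + v ≤ 0 := by
    rw [hquad]
    exact mul_nonpos_of_nonneg_of_nonpos (by positivity) hx
  have hdisc : (2 * lam - u) ^ 2 - 4 * (lam ^ 2 - u * lam + v)
      = x ^ 2 * ((μ ^ 2 - 2 * k ^ 2) * x ^ 2 + 2 * μ * (β - s) * x + ((β - s) ^ 2 - 4 * α)) := by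
    simp only [u, v]
    ring
  have hxR : x ∈ Set.Icc (-R) R := abs_le.mp <| hR x <| nonneg_of_mul_nonneg_right (a := x ^ 2)
    (by rw [← hdisc]; nlinarith [sq_nonneg (2 * lam - u)]) (by positivity)
  have hu := (le_abs_self u).trans ((Real.norm_eq_abs u).symm.trans_le (hU x hxR))
  have hv := (neg_abs_le v).trans' (neg_le_neg ((Real.norm_eq_abs v).symm.trans_le (hV x hxR)))
  have hV0 : 0 ≤ V := (norm_nonneg _).trans (hV x hxR)
  nlinarith

theorem charQuartic_eventually_roots_eq_conj_pairs (hμ : 0 < μ) (hk : 0 < k)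
    (hlt : μ ^ 2 < 2 * k ^ 2) :
    ∀ᶠ lam in atTop, ∃ z w : ℂ, z.im ≠ 0 ∧ w.im ≠ 0 ∧ z.re < 0 ∧ 0 < w.re ∧
      (charQuartic s μ k α β lam).roots = {z, starRingEnd ℂ z, w, starRingEnd ℂ w} := by
  filter_upwards [eventually_charQuarticFn_pos hk hlt, eventually_gt_atTop ((α + s * β) / μ)]
    with lam hpos hlam
  refine exists_roots_eq_conj_pairs (charQuartic_monic ..) (charQuartic_natDegree ..)
    (charQuartic_map_conj ..)
    (fun x hx => (hpos x).ne' ((charQuartic_isRoot_ofReal_iff ..).mp hx)) ?_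
  rw [charQuartic_coeff_two, Complex.ofReal_re]
  rw [div_lt_iff₀ hμ] at hlam
  exact mul_neg_of_pos_of_neg (by positivity) (by linarith)

end largeLambda

/-- consistent splitting for large real `λ`: for `μ² ≠ 2k²` there is `Λ > 0`
such that for every real `λ > Λ` the quartic has no purely imaginary roots and, with
multiplicity, exactly two roots in each open half-plane; moreover for `μ² > 2k²` the four
roots are real and distinct (two positive, two negative), while for `μ² < 2k²` they form two
non-real conjugate pairs, one in each open half-plane. -/
theorem stmt_13 (s μ k α β : ℝ) (hs : 0 < s) (hμ : 0 < μ) (hk : 0 < k)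
    (hμk : μ ^ 2 ≠ 2 * k ^ 2) :
    ∃ Λ > 0, ∀ lam : ℝ, Λ < lam →
      (∀ y : ℝ, ¬ (charQuartic s μ k α β lam).IsRoot (Complex.I * (y : ℂ))) ∧
      (∃ z₁ z₂ z₃ z₄ : ℂ,
        (charQuartic s μ k α β lam).roots = {z₁, z₂, z₃, z₄} ∧
        0 < z₁.re ∧ 0 < z₂.re ∧ z₃.re < 0 ∧ z₄.re < 0) ∧
      (2 * k ^ 2 < μ ^ 2 →
        ∃ ν₁ ν₂ ν₃ ν₄ : ℝ, ν₁ < ν₂ ∧ ν₂ < 0 ∧ 0 < ν₃ ∧ ν₃ < ν₄ ∧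
          (charQuartic s μ k α β lam).roots = {(ν₁ : ℂ), (ν₂ : ℂ), (ν₃ : ℂ), (ν₄ : ℂ)}) ∧
      (μ ^ 2 < 2 * k ^ 2 →
        ∃ z w : ℂ, z.im ≠ 0 ∧ w.im ≠ 0 ∧ z.re < 0 ∧ 0 < w.re ∧
          (charQuartic s μ k α β lam).roots = {z, (starRingEnd ℂ) z, w, (starRingEnd ℂ) w}) := by
  refine Eventually.exists_pos_forall_gt ?_
  rcases hμk.lt_or_gt with hlt | hgt
  · filter_upwards [charQuartic_eventually_not_isRoot_I_mul hs hμ hk,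
      charQuartic_eventually_roots_eq_conj_pairs (s := s) (α := α) (β := β) hμ hk hlt]
      with lam hI ⟨z, w, hz, hw, hzre, hwre, hroots⟩
    refine ⟨hI, ⟨w, starRingEnd ℂ w, z, starRingEnd ℂ z,
      hroots.trans (Multiset.insert_insert_insert_singleton_swap _ _ _ _),
      hwre, by simpa using hwre, hzre, by simpa using hzre⟩,
      fun h => absurd h hlt.not_gt, fun _ => ⟨z, w, hz, hw, hzre, hwre, hroots⟩⟩
  · filter_upwards [charQuartic_eventually_not_isRoot_I_mul hs hμ hk,
      charQuartic_eventually_roots_eq_real (s := s) (α := α) (β := β) hμ hk hgt]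
      with lam hI ⟨ν₁, ν₂, ν₃, ν₄, h₁₂, h₂, h₃, h₃₄, hroots⟩
    refine ⟨hI, ⟨ν₃, ν₄, ν₁, ν₂,
      hroots.trans (Multiset.insert_insert_insert_singleton_swap _ _ _ _),
      by simpa using h₃, by simpa using h₃.trans h₃₄, by simpa using h₁₂.trans h₂,
      by simpa using h₂⟩,
      fun _ => ⟨ν₁, ν₂, ν₃, ν₄, h₁₂, h₂, h₃, h₃₄, hroots⟩, fun h => absurd h hgt.not_gt⟩
end

section
/- Let μ, k > 0, s, β ∈ ℝ, α ≤ 0, and ξ ∈ ℝ. Then every complex root λ of the dispersion relation λ² + ξ(μξ − i(s + β))λ + ξ²(−α + k²ξ²/2 − s(β + iμξ)) = 0 satisfies Re λ ≤ 0. Moreover, if ξ ≠ 0, then every such root satisfies Re λ < 0. -/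
/-!
Substituting `λ = ν + iξs` turns the dispersion relation into `ν² + bν + c = 0` with
`Re b = μξ² ≥ 0` and real `c = ξ²(−α + k²ξ²/2) ≥ 0`, positive when `ξ ≠ 0`. For any root `z` of such
a quadratic, the real part of `z̄ (z² + bz + c) = 0` reads `Re z · (|z|² + c) = −Re b · |z|²`,
which forces `Re z ≤ 0`, and `Re z < 0` once `Re b > 0` and `c > 0`.
-/

open Complex

lemma re_mul_normSq_add_eq_of_sq_add_mul_add_eq_zero {z b : ℂ} {c : ℝ}
    (h : z ^ 2 + b * z + c = 0) : z.re * (normSq z + c) = -(b.re * normSq z) := by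
  have hre := congrArg re h
  have him := congrArg im h
  simp only [add_re, add_im, mul_re, mul_im, pow_two, ofReal_re, ofReal_im, zero_re,
    zero_im] at hre him
  rw [normSq_apply]
  linear_combination z.re * hre + z.im * him

lemma re_nonpos_of_sq_add_mul_add_eq_zero {z b : ℂ} {c : ℝ} (hb : 0 ≤ b.re) (hc : 0 ≤ c)
    (h : z ^ 2 + b * z + c = 0) : z.re ≤ 0 := by
  by_contra! hpos
  have hnormSq : 0 < normSq z := normSq_pos.mpr fun hz => by simp [hz] at hpos
  have hprod : 0 < z.re * (normSq z + c) := mul_pos hpos (by linarith)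
  rw [re_mul_normSq_add_eq_of_sq_add_mul_add_eq_zero h] at hprod
  linarith [mul_nonneg hb hnormSq.le]

lemma re_neg_of_sq_add_mul_add_eq_zero {z b : ℂ} {c : ℝ} (hb : 0 < b.re) (hc : 0 < c)
    (h : z ^ 2 + b * z + c = 0) : z.re < 0 := by
  have hz : z ≠ 0 := by
    rintro rfl
    norm_num at h
    exact hc.ne' h
  have hnormSq : 0 < normSq z := normSq_pos.mpr hz
  have hprod : z.re * (normSq z + c) < 0 := by
    rw [re_mul_normSq_add_eq_of_sq_add_mul_add_eq_zero h]
    exact neg_neg_of_pos (mul_pos hb hnormSq)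
  exact neg_of_mul_neg_left hprod (add_pos hnormSq hc).le

/-- stability of the essential spectrum for subsonic or sonic states
(`α ≤ 0`): every root `λ` of the dispersion relation
`λ² + ξ(μξ − i(s+β))λ + ξ²(−α + k²ξ²/2 − s(β + iμξ)) = 0`
satisfies `Re λ ≤ 0`, with strict inequality when `ξ ≠ 0`. -/
theorem stmt_14 (μ k s β α ξ : ℝ) (hμ : 0 < μ) (hk : 0 < k) (hα : α ≤ 0) :
    ∀ lam : ℂ,
      lam ^ 2
        + (ξ : ℂ) * (((μ * ξ : ℝ) : ℂ) - Complex.I * ((s + β : ℝ) : ℂ)) * lam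
        + ((ξ : ℂ)) ^ 2 *
            (((-α + k ^ 2 * ξ ^ 2 / 2 - s * β : ℝ) : ℂ) - Complex.I * ((s * μ * ξ : ℝ) : ℂ))
        = 0 →
      lam.re ≤ 0 ∧ (ξ ≠ 0 → lam.re < 0) := by
  intro lam heq
  set b : ℂ := ((μ * ξ ^ 2 : ℝ) : ℂ) + ((ξ * (s - β) : ℝ) : ℂ) * I
  set c : ℝ := ξ ^ 2 * (-α + k ^ 2 * ξ ^ 2 / 2)
  have hshift : (lam - ξ * s * I) ^ 2 + b * (lam - ξ * s * I) + c = 0 := by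
    rw [← heq]; simp only [b, c]; push_cast; ring_nf; rw [I_sq]; ring
  have hre : (lam - ξ * s * I).re = lam.re := by simp
  have hb : b.re = μ * ξ ^ 2 := by
    simp only [b, add_re, mul_re, ofReal_re, ofReal_im, I_re, I_im]; ring
  have hα' : 0 ≤ -α := by linarith
  refine ⟨hre ▸ re_nonpos_of_sq_add_mul_add_eq_zero (by rw [hb]; positivity) (by positivity)
    hshift, fun hξ => ?_⟩
  exact hre ▸ re_neg_of_sq_add_mul_add_eq_zero (by rw [hb]; positivity) (by positivity) hshift
end

section
/- Let μ, k > 0 with μ² < 2k², and let λ̃ ∈ ℂ with |λ̃| = 1 and Re λ̃ ≥ 0. Then the quartic polynomial z⁴ − (2μ/k²)λ̃z² + (2/k²)λ̃² has four pairwise distinct complex roots, none of which is purely imaginary, and exactly two of them have strictly positive real part while the other two have strictly negative real part. -/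
/-!
Substituting `w = z²` turns the quartic into `w² - (2μ/k²)λ w + (2/k²)λ² = 0`, whose roots are
`λc` and `λc̄` for the complex number `c = (μ + i√(2k² - μ²))/k²`, with `Re c = μ/k²` and
`|c|² = 2/k²`. Since `Re λ ≥ 0` and `Re c > 0`, neither `λc` nor `λc̄` lies on the closed negative
real axis, so each has a square root `x`, `y` with positive real part; the roots of the quartic are
then `±x, ±y`, and they are distinct because `λc ≠ λc̄`.
-/

open Polynomial ComplexConjugate

namespace Complex

theorem exists_sq_eq_re_pos_of_mem_slitPlane {w : ℂ} (hw : w ∈ slitPlane) :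
    ∃ z : ℂ, z ^ 2 = w ∧ 0 < z.re := by
  obtain ⟨u, rfl⟩ := IsAlgClosed.exists_pow_nat_eq w two_pos
  have hu : u.re ≠ 0 := by
    intro h
    rw [mem_slitPlane_iff] at hw
    simp only [sq, mul_re, mul_im, h] at hw
    rcases hw with hw | hw
    · nlinarith [sq_nonneg u.im]
    · simp at hw
  rcases hu.lt_or_gt with h | h
  · exact ⟨-u, neg_sq u, by simpa using h⟩
  · exact ⟨u, rfl, h⟩

theorem mul_mem_slitPlane_of_re_nonneg {a b : ℂ} (ha : 0 ≤ a.re) (ha₀ : a ≠ 0) (hb : 0 < b.re) :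
    a * b ∈ slitPlane := by
  rw [mem_slitPlane_iff]
  by_contra! h
  simp only [mul_re, mul_im] at h
  obtain ⟨hre, him⟩ := h
  -- the real part of `(a * b) * conj b`
  have hnormSq : a.re * (b.re ^ 2 + b.im ^ 2)
      = b.re * (a.re * b.re - a.im * b.im) + b.im * (a.re * b.im + a.im * b.re) := by ring
  rw [him, mul_zero, add_zero] at hnormSq
  have ha_re : a.re = 0 := by
    refine le_antisymm (nonpos_of_mul_nonpos_left (b := b.re ^ 2 + b.im ^ 2) ?_ (by positivity)) ha
    rw [hnormSq]
    exact mul_nonpos_of_nonneg_of_nonpos hb.le hre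
  have ha_im : a.im = 0 := by
    rw [ha_re, zero_mul, zero_add] at him
    exact (mul_eq_zero.mp him).resolve_right hb.ne'
  exact ha₀ (ext ha_re ha_im)

theorem exists_re_eq_normSq_eq_im_ne_zero {a r : ℝ} (h : a ^ 2 < r) :
    ∃ c : ℂ, c.re = a ∧ normSq c = r ∧ c.im ≠ 0 := by
  refine ⟨⟨a, √(r - a ^ 2)⟩, rfl, ?_, (Real.sqrt_pos.mpr (by linarith)).ne'⟩
  rw [normSq_mk, Real.mul_self_sqrt (by linarith)]
  ring

theorem ne_neg_of_re_pos {x y : ℂ} (hx : 0 < x.re) (hy : 0 < y.re) : x ≠ -y := by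
  intro h
  have := congrArg re h
  rw [neg_re] at this
  linarith

end Complex

theorem Polynomial.roots_X_pow_four_sub_C_mul_X_sq_add_C {R : Type*} [CommRing R] [IsDomain R]
    (x y : R) :
    (X ^ 4 - C (x ^ 2 + y ^ 2) * X ^ 2 + C (x ^ 2 * y ^ 2)).roots = {x, y, -x, -y} := by
  have : X ^ 4 - C (x ^ 2 + y ^ 2) * X ^ 2 + C (x ^ 2 * y ^ 2)
      = (({x, y, -x, -y} : Multiset R).map (fun a => X - C a)).prod := by
    simp only [Multiset.insert_eq_cons, Multiset.map_cons, Multiset.map_singleton,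
      Multiset.prod_cons, Multiset.prod_singleton, map_add, map_mul, map_pow, map_neg]
    ring
  rw [this, roots_multiset_prod_X_sub_C]

open Complex in
/-- for `μ² < 2k²` and a unit complex number `λ̃` with `Re λ̃ ≥ 0`, the limiting
quartic `z⁴ − (2μ/k²)λ̃z² + (2/k²)λ̃²` has four pairwise distinct roots, none purely
imaginary, exactly two with positive real part and two with negative real part. -/
theorem stmt_18 (μ k : ℝ) (hμ : 0 < μ) (hk : 0 < k) (hμk : μ ^ 2 < 2 * k ^ 2)
    (lam : ℂ) (hlam : ‖lam‖ = 1) (hre : 0 ≤ lam.re) :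
    ∃ z₁ z₂ z₃ z₄ : ℂ,
      z₁ ≠ z₂ ∧ z₁ ≠ z₃ ∧ z₁ ≠ z₄ ∧ z₂ ≠ z₃ ∧ z₂ ≠ z₄ ∧ z₃ ≠ z₄ ∧
      (X ^ 4 - C (((2 * μ / k ^ 2 : ℝ) : ℂ) * lam) * X ^ 2
          + C (((2 / k ^ 2 : ℝ) : ℂ) * lam ^ 2)).roots = {z₁, z₂, z₃, z₄} ∧
      z₁.re ≠ 0 ∧ z₂.re ≠ 0 ∧ z₃.re ≠ 0 ∧ z₄.re ≠ 0 ∧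
      0 < z₁.re ∧ 0 < z₂.re ∧ z₃.re < 0 ∧ z₄.re < 0 := by
  have hlam₀ : lam ≠ 0 := norm_ne_zero_iff.mp (by rw [hlam]; exact one_ne_zero)
  have hdisc : (μ / k ^ 2) ^ 2 < 2 / k ^ 2 :=
    calc (μ / k ^ 2) ^ 2 = μ ^ 2 / k ^ 2 / k ^ 2 := by ring
      _ < 2 * k ^ 2 / k ^ 2 / k ^ 2 := by gcongr
      _ = 2 / k ^ 2 := by field_simp
  obtain ⟨c, hc_re, hc_normSq, hc_im⟩ := exists_re_eq_normSq_eq_im_ne_zero hdisc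
  have hc_pos : 0 < c.re := hc_re ▸ by positivity
  obtain ⟨x, hx_sq, hx_re⟩ :=
    exists_sq_eq_re_pos_of_mem_slitPlane (mul_mem_slitPlane_of_re_nonneg hre hlam₀ hc_pos)
  obtain ⟨y, hy_sq, hy_re⟩ := exists_sq_eq_re_pos_of_mem_slitPlane
    (mul_mem_slitPlane_of_re_nonneg (b := conj c) hre hlam₀ (by rwa [conj_re]))
  have hsq_ne : x ^ 2 ≠ y ^ 2 := by
    rw [hx_sq, hy_sq, Ne, mul_right_inj' hlam₀, eq_comm, conj_eq_iff_im]
    exact hc_im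
  have hsum : ((2 * μ / k ^ 2 : ℝ) : ℂ) * lam = x ^ 2 + y ^ 2 := by
    rw [hx_sq, hy_sq, ← mul_add, add_conj, hc_re, mul_comm, mul_div_assoc]
  have hprod : ((2 / k ^ 2 : ℝ) : ℂ) * lam ^ 2 = x ^ 2 * y ^ 2 := by
    rw [hx_sq, hy_sq, mul_mul_mul_comm, mul_conj, hc_normSq, mul_comm, sq]
  refine ⟨x, y, -x, -y, fun h => hsq_ne (by rw [h]), ne_neg_of_re_pos hx_re hx_re,
    ne_neg_of_re_pos hx_re hy_re, ne_neg_of_re_pos hy_re hx_re, ne_neg_of_re_pos hy_re hy_re,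
    fun h => hsq_ne (by rw [neg_injective h]), ?_, hx_re.ne', hy_re.ne', by simpa using hx_re.ne',
    by simpa using hy_re.ne', hx_re, hy_re, by simpa using hx_re, by simpa using hy_re⟩
  rw [hsum, hprod, roots_X_pow_four_sub_C_mul_X_sq_add_C]
end

section
/- Let γ ≥ 1, s ∈ ℝ, μ, k > 0, A ∈ ℝ, let P : ℝ → (0,∞) be a smooth function with J = sP − A, and set f₁(x) = J(x)²/P(x)² − γP(x)^{γ−1} and f₂(x) = s − 2J(x)/P(x). Suppose λ ∈ ℂ, λ ≠ 0, and ρ̃, J̃ : ℝ → ℂ are smooth functions for which there exist constants C₁, C₂ > 0 with |ρ̃(x)| + |J̃(x)| ≤ C₁·exp(−C₂|x|) for all x ∈ ℝ, satisfying λρ̃ = sρ̃' − J̃' and λJ̃ = (f₁ρ̃)' + (f₂J̃)' + μJ̃'' + (k²/2)ρ̃'''. Then the function ρ̂(x) = ∫_{−∞}^x ρ̃(y) dy decays exponentially as x → −∞ and as x → +∞, one has J̃ = sρ̂' − λρ̂ on ℝ, and ρ̂ satisfies the scalar fourth-order equation ρ̂⁽⁴⁾ + (2sμ/k²)ρ̂'''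 + (2/k²)(f₁ + f₂s − λμ)ρ̂'' + (2/k²)(f₁' + sf₂' − λf₂ − sλ)ρ̂' + (2/k²)(−λf₂' + λ²)ρ̂ = 0. -/
open MeasureTheory

section AuxLemmas
open MeasureTheory Filter Set Topology

lemma aux_hasDerivAt_exp_mul {b : ℝ} (hb : b ≠ 0) (x : ℝ) :
    HasDerivAt (fun t => Real.exp (b * t) / b) (Real.exp (b * x)) x := by
  have h1 : HasDerivAt (fun t : ℝ => b * t) b x := by
    simpa using (hasDerivAt_id x).const_mul b
  have := ((Real.hasDerivAt_exp (b * x)).comp x h1).div_const b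
  have h2 : Real.exp (b * x) * b / b = Real.exp (b * x) := by field_simp
  rw [← h2]
  exact this

lemma aux_integrableOn_exp_mul_Iic {b : ℝ} (hb : 0 < b) (c : ℝ) :
    IntegrableOn (fun y : ℝ => Real.exp (b * y)) (Set.Iic c) := by
  have hcont : Continuous fun y : ℝ => Real.exp (b * y) :=
    Real.continuous_exp.comp (continuous_const.mul continuous_id)
  refine integrableOn_Iic_of_intervalIntegral_norm_bounded (Real.exp (b * c) / b) c
    (fun y => hcont.integrableOn_Ioc) tendsto_id ?_
  filter_upwards [Iic_mem_atBot c] with y (hy : y ≤ c)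
  simp only [id_eq]
  have h2 : (∫ x in y..c, ‖Real.exp (b * x)‖) = ∫ x in y..c, Real.exp (b * x) := by
    simp [Real.norm_eq_abs, abs_of_pos (Real.exp_pos _)]
  rw [h2, intervalIntegral.integral_eq_sub_of_hasDerivAt
    (fun x _ => aux_hasDerivAt_exp_mul hb.ne' x) (hcont.intervalIntegrable _ _)]
  have h3 : 0 ≤ Real.exp (b * y) / b := by positivity
  linarith

lemma aux_integral_exp_mul_Iic {b : ℝ} (hb : 0 < b) (c : ℝ) :
    ∫ y in Set.Iic c, Real.exp (b * y) = Real.exp (b * c) / b := by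
  have ht : Tendsto (fun t : ℝ => Real.exp (b * t) / b) atBot (𝓝 0) := by
    have h1 : Tendsto (fun t : ℝ => b * t) atBot atBot := by
      exact tendsto_id.const_mul_atBot hb
    have := (Real.tendsto_exp_atBot.comp h1).div_const b
    simpa using this
  have := integral_Iic_of_hasDerivAt_of_tendsto'
    (fun x _ => aux_hasDerivAt_exp_mul hb.ne' x) (aux_integrableOn_exp_mul_Iic hb c) ht
  simpa using this

end AuxLemmas


/-- reduction of the eigenvalue problem (with linear dispersion) to a scalar
fourth-order ODE: for `λ ≠ 0` and an exponentially decaying eigenfunction pair `(ρ̃, J̃)`, the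
integrated variable `ρ̂(x) = ∫_{−∞}^x ρ̃` decays exponentially as `x → ±∞`, satisfies
`J̃ = sρ̂' − λρ̂`, and solves the scalar fourth-order equation. -/
theorem stmt_19 (γ s μ k A : ℝ) (hγ : 1 ≤ γ) (hμ : 0 < μ) (hk : 0 < k)
    (P J f₁ f₂ : ℝ → ℝ) (hP : ContDiff ℝ (⊤ : ℕ∞) P) (hPpos : ∀ x : ℝ, 0 < P x)
    (hJ : ∀ x : ℝ, J x = s * P x - A)
    (hf₁ : ∀ x : ℝ, f₁ x = (J x) ^ 2 / (P x) ^ 2 - γ * (P x) ^ (γ - 1))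
    (hf₂ : ∀ x : ℝ, f₂ x = s - 2 * J x / P x)
    (lam : ℂ) (hlam : lam ≠ 0)
    (rho Jt : ℝ → ℂ) (hrho : ContDiff ℝ (⊤ : ℕ∞) rho) (hJt : ContDiff ℝ (⊤ : ℕ∞) Jt)
    (C₁ C₂ : ℝ) (hC₁ : 0 < C₁) (hC₂ : 0 < C₂)
    (hdecay : ∀ x : ℝ, ‖rho x‖ + ‖Jt x‖ ≤ C₁ * Real.exp (-C₂ * |x|))
    (heq1 : ∀ x : ℝ, lam * rho x = (s : ℂ) * deriv rho x - deriv Jt x)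
    (heq2 : ∀ x : ℝ, lam * Jt x =
      deriv (fun t => ((f₁ t : ℝ) : ℂ) * rho t) x
      + deriv (fun t => ((f₂ t : ℝ) : ℂ) * Jt t) x
      + (μ : ℂ) * deriv (deriv Jt) x
      + ((k ^ 2 / 2 : ℝ) : ℂ) * iteratedDeriv 3 rho x) :
    (∃ D₁ D₂ : ℝ, 0 < D₁ ∧ 0 < D₂ ∧
      ∀ x : ℝ, ‖∫ y in Set.Iic x, rho y‖ ≤ D₁ * Real.exp (-D₂ * |x|)) ∧
    (∀ x : ℝ, Jt x =
      (s : ℂ) * deriv (fun t => ∫ y in Set.Iic t, rho y) x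
        - lam * ∫ y in Set.Iic x, rho y) ∧
    (∀ x : ℝ,
      iteratedDeriv 4 (fun t => ∫ y in Set.Iic t, rho y) x
      + ((2 * s * μ / k ^ 2 : ℝ) : ℂ) * iteratedDeriv 3 (fun t => ∫ y in Set.Iic t, rho y) x
      + ((2 / k ^ 2 : ℝ) : ℂ) * (((f₁ x + f₂ x * s : ℝ) : ℂ) - lam * (μ : ℂ)) *
          iteratedDeriv 2 (fun t => ∫ y in Set.Iic t, rho y) x
      + ((2 / k ^ 2 : ℝ) : ℂ) *
          (((deriv f₁ x + s * deriv f₂ x : ℝ) : ℂ) - lam * ((f₂ x : ℝ) : ℂ)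
            - (s : ℂ) * lam) *
          deriv (fun t => ∫ y in Set.Iic t, rho y) x
      + ((2 / k ^ 2 : ℝ) : ℂ) * (-(lam * ((deriv f₂ x : ℝ) : ℂ)) + lam ^ 2) *
          (∫ y in Set.Iic x, rho y)
      = 0) := by
  classical
  -- basic setup
  set H : ℝ → ℂ := fun x => ∫ y in Set.Iic x, rho y with hHdef
  have hHapp : ∀ x : ℝ, (∫ y in Set.Iic x, rho y) = H x := fun _ => rfl
  have hrho_cont : Continuous rho := hrho.continuous
  have hJt_cont : Continuous Jt := hJt.continuous
  have hbound_rho : ∀ y : ℝ, ‖rho y‖ ≤ C₁ * Real.exp (-C₂ * |y|) := fun y =>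
    le_trans (le_add_of_nonneg_right (norm_nonneg _)) (hdecay y)
  have hbound_Jt : ∀ y : ℝ, ‖Jt y‖ ≤ C₁ * Real.exp (-C₂ * |y|) := fun y =>
    le_trans (le_add_of_nonneg_left (norm_nonneg _)) (hdecay y)
  have habs : ∀ y : ℝ, -C₂ * |y| ≤ C₂ * y := by
    intro y
    have := mul_le_mul_of_nonneg_left (neg_abs_le y) hC₂.le
    simpa [mul_comm, neg_mul, mul_neg] using this
  have hbound_rho' : ∀ y : ℝ, ‖rho y‖ ≤ C₁ * Real.exp (C₂ * y) := fun y =>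
    le_trans (hbound_rho y) (mul_le_mul_of_nonneg_left (Real.exp_le_exp.2 (habs y)) hC₁.le)
  have hbound_Jt' : ∀ y : ℝ, ‖Jt y‖ ≤ C₁ * Real.exp (C₂ * y) := fun y =>
    le_trans (hbound_Jt y) (mul_le_mul_of_nonneg_left (Real.exp_le_exp.2 (habs y)) hC₁.le)
  -- integrability of rho on Iic c
  have hrho_int : ∀ c : ℝ, IntegrableOn rho (Set.Iic c) := by
    intro c
    refine Integrable.mono' ((aux_integrableOn_exp_mul_Iic hC₂ c).const_mul C₁)
      hrho_cont.aestronglyMeasurable.restrict (ae_of_all _ fun y => hbound_rho' y)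
  -- derivative of H
  have hHder : ∀ x : ℝ, HasDerivAt H (rho x) x := by
    intro x
    have h1 : HasDerivAt (fun u => ∫ t in (0:ℝ)..u, rho t) (rho x) x :=
      intervalIntegral.integral_hasDerivAt_right (hrho_cont.intervalIntegrable 0 x)
        (hrho_cont.stronglyMeasurableAtFilter _ _) hrho_cont.continuousAt
    have h2 : H = fun u => (∫ t in (0:ℝ)..u, rho t) + H 0 := by
      funext u
      have h3 := intervalIntegral.integral_Iic_sub_Iic (hrho_int 0) (hrho_int u)
      simp only [hHdef]
      rw [← h3]
      ring
    rw [h2]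
    exact h1.add_const _
  have hHderiv : deriv H = rho := funext fun x => (hHder x).deriv
  -- bound on H near -infty
  have hHbound : ∀ x : ℝ, ‖H x‖ ≤ C₁ / C₂ * Real.exp (C₂ * x) := by
    intro x
    calc ‖H x‖ ≤ ∫ y in Set.Iic x, ‖rho y‖ := norm_integral_le_integral_norm _
      _ ≤ ∫ y in Set.Iic x, C₁ * Real.exp (C₂ * y) := by
          refine integral_mono_of_nonneg (ae_of_all _ fun y => norm_nonneg _)
            ((aux_integrableOn_exp_mul_Iic hC₂ x).const_mul C₁)
            (ae_of_all _ fun y => hbound_rho' y)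
      _ = C₁ / C₂ * Real.exp (C₂ * x) := by
          rw [integral_const_mul, aux_integral_exp_mul_Iic hC₂ x]
          ring
  -- tendsto facts at -infty
  have hexp0 : ∀ c : ℝ, Filter.Tendsto (fun x : ℝ => c * Real.exp (C₂ * x))
      Filter.atBot (nhds 0) := by
    intro c
    have h1 : Filter.Tendsto (fun t : ℝ => C₂ * t) Filter.atBot Filter.atBot :=
      Filter.tendsto_id.const_mul_atBot hC₂
    have := (Real.tendsto_exp_atBot.comp h1).const_mul c
    simpa using this
  have hrho0 : Filter.Tendsto rho Filter.atBot (nhds 0) :=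
    squeeze_zero_norm hbound_rho' (hexp0 C₁)
  have hJt0 : Filter.Tendsto Jt Filter.atBot (nhds 0) :=
    squeeze_zero_norm hbound_Jt' (hexp0 C₁)
  have hH0 : Filter.Tendsto H Filter.atBot (nhds 0) :=
    squeeze_zero_norm hHbound (hexp0 (C₁ / C₂))
  -- the function g
  set g : ℝ → ℂ := fun x => (s : ℂ) * rho x - Jt x - lam * H x with hgdef
  have hrhoD : ∀ x : ℝ, HasDerivAt rho (deriv rho x) x := fun x =>
    (hrho.differentiable (by simp) x).hasDerivAt
  have hJtD : ∀ x : ℝ, HasDerivAt Jt (deriv Jt x) x := fun x =>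
    (hJt.differentiable (by simp) x).hasDerivAt
  have hgder : ∀ x : ℝ, HasDerivAt g 0 x := by
    intro x
    have h1 : HasDerivAt g ((s : ℂ) * deriv rho x - deriv Jt x - lam * rho x) x :=
      (((hrhoD x).const_mul (s : ℂ)).sub (hJtD x)).sub ((hHder x).const_mul lam)
    have h2 : (s : ℂ) * deriv rho x - deriv Jt x - lam * rho x = 0 := by
      linear_combination - heq1 x
    rwa [h2] at h1
  have hgconst : ∀ x : ℝ, g x = g 0 := fun x =>
    is_const_of_deriv_eq_zero (fun y => (hgder y).differentiableAt)
      (fun y => (hgder y).deriv) x 0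
  have hg0 : g 0 = 0 := by
    have h1 : Filter.Tendsto g Filter.atBot (nhds ((s : ℂ) * 0 - 0 - lam * 0)) :=
      ((hrho0.const_mul (s : ℂ)).sub hJt0).sub (hH0.const_mul lam)
    have h2 : Filter.Tendsto g Filter.atBot (nhds (g 0)) :=
      Filter.Tendsto.congr (fun x => (hgconst x).symm) tendsto_const_nhds
    have := tendsto_nhds_unique h2 h1
    simpa using this
  have key : ∀ x : ℝ, Jt x = (s : ℂ) * rho x - lam * H x := by
    intro x
    have h1 : (s : ℂ) * rho x - Jt x - lam * H x = 0 := (hgconst x).trans hg0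
    linear_combination - h1
  -- Part 1 : decay
  have hnl : (0 : ℝ) < ‖lam‖ := norm_pos_iff.mpr hlam
  refine ⟨⟨(|s| + 1) * C₁ / ‖lam‖, C₂, by positivity, hC₂, ?_⟩, ?_, ?_⟩
  · intro x
    rw [hHapp x]
    have h1 : ‖lam‖ * ‖H x‖ ≤ (|s| + 1) * (C₁ * Real.exp (-C₂ * |x|)) := by
      have h2 : lam * H x = (s : ℂ) * rho x - Jt x := by linear_combination key x
      rw [← norm_mul, h2]
      calc ‖(s : ℂ) * rho x - Jt x‖ ≤ ‖(s : ℂ) * rho x‖ + ‖Jt x‖ := norm_sub_le _ _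
        _ = |s| * ‖rho x‖ + ‖Jt x‖ := by
            rw [norm_mul, Complex.norm_real, Real.norm_eq_abs]
        _ ≤ (|s| + 1) * (C₁ * Real.exp (-C₂ * |x|)) := by
            nlinarith [hdecay x, norm_nonneg (rho x), norm_nonneg (Jt x), abs_nonneg s]
    rw [div_mul_eq_mul_div, le_div_iff₀ hnl]
    nlinarith [h1]
  -- Part 2
  · intro x
    rw [(hHder x).deriv, hHapp x]
    exact key x
  -- Part 3
  · intro x
    -- differentiability of f₁, f₂
    have hPd : Differentiable ℝ P := hP.differentiable (by simp)
    have hf₁fun : f₁ = fun x => (s * P x - A) ^ 2 / (P x) ^ 2 - γ * (P x) ^ (γ - 1) :=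
      funext fun x => by rw [hf₁ x, hJ x]
    have hf₂fun : f₂ = fun x => s - 2 * (s * P x - A) / P x :=
      funext fun x => by rw [hf₂ x, hJ x]
    have hf₁diff : Differentiable ℝ f₁ := by
      rw [hf₁fun]
      intro y
      exact ((((hPd y).const_mul s).sub_const A).pow 2).div ((hPd y).pow 2)
          (pow_ne_zero 2 (hPpos y).ne') |>.sub
        (((hPd y).rpow_const (Or.inl (hPpos y).ne')).const_mul γ)
    have hf₂diff : Differentiable ℝ f₂ := by
      rw [hf₂fun]
      intro y
      exact (differentiableAt_const s).sub
        ((((((hPd y).const_mul s).sub_const A)).const_mul 2).div (hPd y) (hPpos y).ne')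
    have hf₁C : HasDerivAt (fun t => ((f₁ t : ℝ) : ℂ)) ((deriv f₁ x : ℝ) : ℂ) x :=
      ((hf₁diff x).hasDerivAt).ofReal_comp
    have hf₂C : HasDerivAt (fun t => ((f₂ t : ℝ) : ℂ)) ((deriv f₂ x : ℝ) : ℂ) x :=
      ((hf₂diff x).hasDerivAt).ofReal_comp
    -- derivative identities
    have hd1 : deriv (fun t => ((f₁ t : ℝ) : ℂ) * rho t) x
        = ((deriv f₁ x : ℝ) : ℂ) * rho x + (f₁ x : ℂ) * deriv rho x :=
      (hf₁C.mul (hrhoD x)).deriv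
    have hd2 : deriv (fun t => ((f₂ t : ℝ) : ℂ) * Jt t) x
        = ((deriv f₂ x : ℝ) : ℂ) * Jt x + (f₂ x : ℂ) * deriv Jt x :=
      (hf₂C.mul (hJtD x)).deriv
    have hJtfun : Jt = fun y => (s : ℂ) * rho y - lam * H y := funext key
    have hderivJt : ∀ y : ℝ, deriv Jt y = (s : ℂ) * deriv rho y - lam * rho y := by
      intro y
      have h1 : HasDerivAt Jt ((s : ℂ) * deriv rho y - lam * rho y) y := by
        rw [hJtfun]
        exact ((hrhoD y).const_mul (s : ℂ)).sub ((hHder y).const_mul lam)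
      exact h1.deriv
    have hdrho : Differentiable ℝ (deriv rho) :=
      ((contDiff_infty_iff_deriv.mp (hrho.of_le (by simp))).2).differentiable
        (by simp)
    have hit2 : iteratedDeriv 2 rho = deriv (deriv rho) := by
      rw [show (2 : ℕ) = 1 + 1 from rfl, iteratedDeriv_succ, iteratedDeriv_one]
    have hdd : deriv (deriv Jt) x = (s : ℂ) * iteratedDeriv 2 rho x - lam * deriv rho x := by
      have h1 : HasDerivAt (deriv Jt) ((s : ℂ) * iteratedDeriv 2 rho x - lam * deriv rho x) x := by
        rw [funext hderivJt, hit2]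
        exact ((hdrho x).hasDerivAt.const_mul (s : ℂ)).sub ((hrhoD x).const_mul lam)
      exact h1.deriv
    -- iterated derivatives of H
    have hH4 : iteratedDeriv 4 H = iteratedDeriv 3 rho := by
      rw [show (4 : ℕ) = 3 + 1 from rfl, iteratedDeriv_succ', hHderiv]
    have hH3 : iteratedDeriv 3 H = iteratedDeriv 2 rho := by
      rw [show (3 : ℕ) = 2 + 1 from rfl, iteratedDeriv_succ', hHderiv]
    have hH2 : iteratedDeriv 2 H = deriv rho := by
      rw [show (2 : ℕ) = 1 + 1 from rfl, iteratedDeriv_succ', hHderiv, iteratedDeriv_one]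
    -- assemble
    have E := heq2 x
    rw [hd1, hd2, hdd, hderivJt x, key x] at E
    rw [hH4, hH3, hH2, (hHder x).deriv, hHapp x]
    have hkC : ((k : ℂ)) ≠ 0 := by
      exact_mod_cast (Complex.ofReal_ne_zero.mpr hk.ne')
    push_cast
    push_cast at E
    field_simp
    linear_combination (-2 : ℂ) * E
end
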